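/- arXiv:1804.07832 — 5 statements merged into one kernel-verified Lean document; each statement's English description precedes it below -/
import Mathlib

section
/- Let D be a valid diagram which admits a right exchange at height n. Then its right exchange D_{R,n} is a valid diagram. Likewise, if D admits a left exchange at height n, then its left exchange D_{L,n} is a valid diagram. -/
/-- Combinatorial encoding of a planar string diagram. -/
structure Diagram where
  S : ℕ
  N : ℕ
  H : ℕ → ℕ
  I : ℕ → ℕ
  O : ℕ → ℕ

namespace Diagram

/-- `D.Δ n = D.O n - D.I n`, as an integer. -/
def Δ (D : Diagram) (n : ℕ) : ℤ := (D.O n : ℤ) - (D.I n : ℤ)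

/-- Number of wires at each level. -/
def W (D : Diagram) : ℕ → ℤ
  | 0 => (D.S : ℤ)
  | n + 1 => D.W n + D.Δ n

/-- A diagram is valid when there are enough edges above each vertex. -/
def Valid (D : Diagram) : Prop :=
  ∀ n < D.N, ((D.H n + D.I n : ℕ) : ℤ) ≤ D.W n

/-- `D` admits a right exchange move at height `n`. -/
def AdmitsRight (D : Diagram) (n : ℕ) : Prop :=
  n + 1 < D.N ∧ D.H n + D.O n ≤ D.H (n + 1)

/-- `D` admits a left exchange move at height `n`. -/
def AdmitsLeft (D : Diagram) (n : ℕ) : Prop :=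
  n + 1 < D.N ∧ D.H (n + 1) + D.I (n + 1) ≤ D.H n

/-- The right exchange `D_{R,n}`.  (Note `D.H (n+1) + D.I n - D.O n` is the
natural-number rendering of `D.H (n+1) - D.Δ n`, exact under admissibility.) -/
def rightExchange (D : Diagram) (n : ℕ) : Diagram where
  S := D.S
  N := D.N
  H := fun m =>
    if m = n then D.H (n + 1) + D.I n - D.O n
    else if m = n + 1 then D.H n
    else D.H m
  I := fun m => if m = n then D.I (n + 1) else if m = n + 1 then D.I n else D.I m
  O := fun m => if m = n then D.O (n + 1) else if m = n + 1 then D.O n else D.O m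

/-- The left exchange `D_{L,n}`. -/
def leftExchange (D : Diagram) (n : ℕ) : Diagram where
  S := D.S
  N := D.N
  H := fun m =>
    if m = n then D.H (n + 1)
    else if m = n + 1 then D.H n + D.O (n + 1) - D.I (n + 1)
    else D.H m
  I := fun m => if m = n then D.I (n + 1) else if m = n + 1 then D.I n else D.I m
  O := fun m => if m = n then D.O (n + 1) else if m = n + 1 then D.O n else D.O m

/-- A closed diagram: no source and no target edges. -/
def Closed (D : Diagram) : Prop := D.S = 0 ∧ D.W D.N = 0

end Diagram

open Diagram

/-- One right exchange step. -/
def RightStep (D E : Diagram) : Prop := ∃ n, D.AdmitsRight n ∧ E = D.rightExchange n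

/-- Reflexive-transitive closure of right exchange: `D →R* E`. -/
def RightRT : Diagram → Diagram → Prop := Relation.ReflTransGen RightStep

/-- A diagram admitting no right exchange move (a right normal form). -/
def IsRightNormal (D : Diagram) : Prop := ∀ n, ¬ D.AdmitsRight n

/-- `p = (h, k)` is an input position of vertex `v`. -/
def IsInput (D : Diagram) (v : ℕ) (p : ℕ × ℕ) : Prop :=
  v < D.N ∧ p.1 = v ∧ D.H v ≤ p.2 ∧ p.2 < D.H v + D.I v

/-- `p = (h, k)` is an output position of vertex `v`. -/
def IsOutput (D : Diagram) (v : ℕ) (p : ℕ × ℕ) : Prop :=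
  v < D.N ∧ p.1 = v + 1 ∧ D.H v ≤ p.2 ∧ p.2 < D.H v + D.O v

/-- The edge at position `p` persists to position `q` at the next level. -/
def Persist (D : Diagram) (p q : ℕ × ℕ) : Prop :=
  p.1 < D.N ∧ q.1 = p.1 + 1 ∧ ((p.2 : ℤ) < D.W p.1) ∧
    ((p.2 < D.H p.1 ∧ q.2 = p.2) ∨
     (D.H p.1 + D.I p.1 ≤ p.2 ∧ ((q.2 : ℤ) = (p.2 : ℤ) + D.Δ p.1)))

/-- There is a maximal edge from an output of `u` to an input of `v`. -/
def EdgeFromTo (D : Diagram) (u v : ℕ) : Prop :=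
  ∃ p q, IsOutput D u p ∧ Relation.ReflTransGen (Persist D) p q ∧ IsInput D v q

/-- Vertices `u` and `v` are adjacent: some maximal edge runs from one to the other. -/
def Adjacent (D : Diagram) (u v : ℕ) : Prop := EdgeFromTo D u v ∨ EdgeFromTo D v u

/-- A diagram is connected when any two vertices are joined by a path of adjacencies. -/
def Connected (D : Diagram) : Prop :=
  ∀ u v, u < D.N → v < D.N → Relation.ReflTransGen (Adjacent D) u v

/-- Vertex `v` is incident to a maximal edge touching the top boundary (level 0). -/
def TouchesTop (D : Diagram) (v : ℕ) : Prop :=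
  ∃ (k : ℕ) (q : ℕ × ℕ), ((k : ℤ) < D.W 0) ∧
    Relation.ReflTransGen (Persist D) (0, k) q ∧ IsInput D v q

/-- Vertex `v` is incident to a maximal edge touching the bottom boundary (level `D.N`). -/
def TouchesBottom (D : Diagram) (v : ℕ) : Prop :=
  ∃ p q, IsOutput D v p ∧ Relation.ReflTransGen (Persist D) p q ∧ q.1 = D.N

/-- A diagram is boundary-connected if it is connected, or every vertex is joined by
a path of adjacencies to a vertex incident to a maximal edge touching a boundary. -/
def BoundaryConnected (D : Diagram) : Prop :=
  Connected D ∨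
    ∀ u, u < D.N → ∃ v, (TouchesTop D v ∨ TouchesBottom D v) ∧
      Relation.ReflTransGen (Adjacent D) u v

/-- A right reduction `A →R* B` as an explicit finite sequence of right exchange steps. -/
structure Reduction (A B : Diagram) where
  len : ℕ
  seq : ℕ → Diagram
  steps : ℕ → ℕ
  src : seq 0 = A
  tgt : seq len = B
  ok : ∀ i < len, (seq i).AdmitsRight (steps i) ∧ seq (i + 1) = (seq i).rightExchange (steps i)

/-- The action of an exchange at height `n` on the heights of vertices. -/
def swapAt (n h : ℕ) : ℕ := if h = n then n + 1 else if h = n + 1 then n else h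

namespace Reduction

variable {A B : Diagram}

/-- Trajectory of the vertex starting at height `h0` along the reduction. -/
def traj (r : Reduction A B) (h0 : ℕ) : ℕ → ℕ
  | 0 => h0
  | t + 1 => swapAt (r.steps t) (r.traj h0 t)

/-- Step `t` of the reduction involves the vertex with initial height `h0`. -/
def Involves (r : Reduction A B) (h0 t : ℕ) : Prop :=
  t < r.len ∧ (r.traj h0 t = r.steps t ∨ r.traj h0 t = r.steps t + 1)

/-- Step `t` of the reduction exchanges the vertices with initial heights `h0` and `h1`. -/
def ExchangeOf (r : Reduction A B) (h0 h1 t : ℕ) : Prop :=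
  t < r.len ∧
    ((r.traj h0 t = r.steps t ∧ r.traj h1 t = r.steps t + 1) ∨
     (r.traj h1 t = r.steps t ∧ r.traj h0 t = r.steps t + 1))

/-- The configuration at step `t` is collapsible: the only vertices whose height lies
between the heights of the two final vertices are the final vertices themselves.
Here `π` numbers the vertices of `A` so that `A.N - 2` and `A.N - 1` are the finals. -/
def CollapsibleAt (r : Reduction A B) (π : ℕ → ℕ) (t : ℕ) : Prop :=
  ∀ i, i < A.N →
    min (r.traj (π (A.N - 2)) t) (r.traj (π (A.N - 1)) t) ≤ r.traj (π i) t →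
    r.traj (π i) t ≤ max (r.traj (π (A.N - 2)) t) (r.traj (π (A.N - 1)) t) →
    i = A.N - 2 ∨ i = A.N - 1

/-- The reduction is a funnel: each non-final vertex is exchanged at most once with a
final vertex, and an exchange of two non-final vertices forces both to be exchanged
with a final vertex during the reduction, with two different final vertices. -/
def IsFunnel (r : Reduction A B) (π : ℕ → ℕ) : Prop :=
  (∀ i, i < A.N - 2 → ∀ t t',
      (r.ExchangeOf (π i) (π (A.N - 2)) t ∨ r.ExchangeOf (π i) (π (A.N - 1)) t) →
      (r.ExchangeOf (π i) (π (A.N - 2)) t' ∨ r.ExchangeOf (π i) (π (A.N - 1)) t') →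
      t = t') ∧
  (∀ i j t, i < A.N - 2 → j < A.N - 2 → r.ExchangeOf (π i) (π j) t →
      ((∃ t1, r.ExchangeOf (π i) (π (A.N - 2)) t1) ∧
       (∃ t2, r.ExchangeOf (π j) (π (A.N - 1)) t2)) ∨
      ((∃ t1, r.ExchangeOf (π i) (π (A.N - 1)) t1) ∧
       (∃ t2, r.ExchangeOf (π j) (π (A.N - 2)) t2)))

/-- The reduction is collapsible: source and target are collapsible, and any exchange
between a non-final vertex and a final vertex is immediately preceded or followed by
an exchange with the other final vertex. -/
def IsCollapsibleRed (r : Reduction A B) (π : ℕ → ℕ) : Prop :=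
  r.CollapsibleAt π 0 ∧ r.CollapsibleAt π r.len ∧
  ∀ i t, i < A.N - 2 →
    (r.ExchangeOf (π i) (π (A.N - 2)) t →
      r.ExchangeOf (π i) (π (A.N - 1)) (t + 1) ∨
      (1 ≤ t ∧ r.ExchangeOf (π i) (π (A.N - 1)) (t - 1))) ∧
    (r.ExchangeOf (π i) (π (A.N - 1)) t →
      r.ExchangeOf (π i) (π (A.N - 2)) (t + 1) ∨
      (1 ≤ t ∧ r.ExchangeOf (π i) (π (A.N - 2)) (t - 1)))

/-- Cost of a reduction at weight `w`: exchanges involving the last vertex (label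
`A.N - 1`) cost `w`, all others cost `1`. -/
def cost (r : Reduction A B) (π : ℕ → ℕ) (w : ℕ) : ℕ :=
  ∑ t ∈ Finset.range r.len,
    if r.traj (π (A.N - 1)) t = r.steps t ∨ r.traj (π (A.N - 1)) t = r.steps t + 1
    then w else 1

end Reduction

/-- The maximal edge starting at output position `p` of `u` ends at an input of `v`. -/
def EdgeStartsAt (D : Diagram) (u v : ℕ) (p : ℕ × ℕ) : Prop :=
  IsOutput D u p ∧ ∃ q, Relation.ReflTransGen (Persist D) p q ∧ IsInput D v q

/-- `π` numbers the vertices of a linear diagram `D`: it is a bijection from labels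
`0, …, D.N - 1` to heights, consecutive labels (and only those) are adjacent, with
exactly one edge between consecutive vertices; labels `0` and `D.N - 1` are the leaves. -/
def IsLinear (D : Diagram) (π : ℕ → ℕ) : Prop :=
  2 ≤ D.N ∧
  Set.BijOn π (Set.Iio D.N) (Set.Iio D.N) ∧
  (∀ i j, i < D.N → j < D.N → (Adjacent D (π i) (π j) ↔ (i + 1 = j ∨ j + 1 = i))) ∧
  (∀ i, i + 1 < D.N →
    ∃! p : ℕ × ℕ, EdgeStartsAt D (π i) (π (i + 1)) p ∨ EdgeStartsAt D (π (i + 1)) (π i) p)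

/-! ### Spots, places, faces and components (for closed diagrams) -/

/-- A spot `s_{h,k}`: the gap between the `k`-th and `(k+1)`-th edge at level `h`. -/
def ValidSpot (D : Diagram) (p : ℕ × ℕ) : Prop :=
  p.1 ≤ D.N ∧ ((p.2 : ℤ) ≤ D.W p.1)

def Spot (D : Diagram) := { p : ℕ × ℕ // ValidSpot D p }

/-- Adjacency of spots at consecutive levels. -/
def SpotAdj (D : Diagram) (s t : Spot D) : Prop :=
  t.1.1 = s.1.1 + 1 ∧ s.1.1 < D.N ∧
    ((t.1.2 = s.1.2 ∧ s.1.2 ≤ D.H s.1.1) ∨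
     ((t.1.2 : ℤ) = (s.1.2 : ℤ) + D.Δ s.1.1 ∧ D.H s.1.1 + D.I s.1.1 ≤ s.1.2))

/-- Faces are equivalence classes of spots under adjacency. -/
def faceSetoid (D : Diagram) : Setoid (Spot D) := Relation.EqvGen.setoid (SpotAdj D)

def Face (D : Diagram) := Quotient (faceSetoid D)

/-- Places: either the `k`-th edge crossing level `h` (with `1 ≤ k ≤ D.W h`),
encoded `Sum.inl (h, k)`, or the vertex `v_h`, encoded `Sum.inr h`. -/
def ValidPlace (D : Diagram) : (ℕ × ℕ) ⊕ ℕ → Prop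
  | Sum.inl (h, k) => h ≤ D.N ∧ 1 ≤ k ∧ ((k : ℤ) ≤ D.W h)
  | Sum.inr v => v < D.N

def Place (D : Diagram) := { p : (ℕ × ℕ) ⊕ ℕ // ValidPlace D p }

/-- Adjacency of places: places on the same edge at consecutive levels are adjacent,
and a place at an input or output position of a vertex is adjacent to that vertex. -/
def PlaceAdjRaw (D : Diagram) : (ℕ × ℕ) ⊕ ℕ → (ℕ × ℕ) ⊕ ℕ → Prop
  | Sum.inl (h, k), Sum.inl (h', k') =>
      h' = h + 1 ∧ h < D.N ∧
        ((k' = k ∧ k ≤ D.H h) ∨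
         ((k' : ℤ) = (k : ℤ) + D.Δ h ∧ D.H h + D.I h + 1 ≤ k))
  | Sum.inl (h, k), Sum.inr v =>
      (h = v ∧ D.H v + 1 ≤ k ∧ k ≤ D.H v + D.I v) ∨
      (h = v + 1 ∧ D.H v + 1 ≤ k ∧ k ≤ D.H v + D.O v)
  | Sum.inr v, Sum.inl (h, k) =>
      (h = v ∧ D.H v + 1 ≤ k ∧ k ≤ D.H v + D.I v) ∨
      (h = v + 1 ∧ D.H v + 1 ≤ k ∧ k ≤ D.H v + D.O v)
  | Sum.inr _, Sum.inr _ => False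

def PlaceAdj (D : Diagram) (p q : Place D) : Prop := PlaceAdjRaw D p.1 q.1

/-- Components are equivalence classes of places under adjacency. -/
def compSetoid (D : Diagram) : Setoid (Place D) := Relation.EqvGen.setoid (PlaceAdj D)

def Comp (D : Diagram) := Quotient (compSetoid D)

/-- A place and a spot at the same level are neighbours when the place is immediately
to the left or to the right of the spot. -/
def NbrPS (D : Diagram) (p : Place D) (s : Spot D) : Prop :=
  ∃ h k k', p.1 = Sum.inl (h, k') ∧ s.1 = (h, k) ∧ (k' = k ∨ k' = k + 1)

/-- A component neighbours a face (`c ◊ f`). -/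
def NbrCF (D : Diagram) (c : Comp D) (f : Face D) : Prop :=
  ∃ (p : Place D) (s : Spot D),
    Quotient.mk (compSetoid D) p = c ∧ Quotient.mk (faceSetoid D) s = f ∧ NbrPS D p s

/-- A boundary spot: `s_{h,0}` or `s_{h,D.W h}`. -/
def IsBoundarySpot (D : Diagram) (s : Spot D) : Prop :=
  s.1.2 = 0 ∨ (s.1.2 : ℤ) = D.W s.1.1

/-- The face of the boundary spot `s_{0,0}`. -/
def rootFace (D : Diagram) : Face D :=
  Quotient.mk (faceSetoid D) ⟨(0, 0), Nat.zero_le _, by simp [Diagram.W]⟩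

/-- The injection `I^D_s(E)` of a closed diagram `E` at the spot `s = s_{a,k}` of `D`. -/
def inject (D : Diagram) (a k : ℕ) (E : Diagram) : Diagram where
  S := D.S
  N := D.N + E.N
  H := fun h => if h < a then D.H h else if h < a + E.N then E.H (h - a) + k else D.H (h - E.N)
  I := fun h => if h < a then D.I h else if h < a + E.N then E.I (h - a) else D.I (h - E.N)
  O := fun h => if h < a then D.O h else if h < a + E.N then E.O (h - a) else D.O (h - E.N)

/-- exchanges preserve validity (Lemma `exchangevalid`). -/
theorem exchange_preserves_valid (D : Diagram) (n : ℕ) (hD : D.Valid) :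
    (D.AdmitsRight n → (D.rightExchange n).Valid) ∧
    (D.AdmitsLeft n → (D.leftExchange n).Valid) := by
  constructor
  · rintro ⟨hn, hadm⟩
    have hW : ∀ m, (D.rightExchange n).W m =
        if m = n + 1 then D.W n + D.Δ (n + 1) else D.W m := by
      intro m
      induction m with
      | zero => simp [Diagram.W, Diagram.rightExchange]
      | succ k ih =>
        rcases eq_or_ne k n with h1 | h1
        · rw [h1] at ih ⊢
          rw [show (D.rightExchange n).W (n + 1) = (D.rightExchange n).W n + (D.rightExchange n).Δ n from rfl,
            ih, if_neg (by omega : ¬ (n : ℕ) = n + 1), if_pos rfl]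
          simp [Diagram.Δ, Diagram.rightExchange]
        · rcases eq_or_ne k (n + 1) with h2 | h2
          · rw [h2] at ih ⊢
            rw [show (D.rightExchange n).W (n + 1 + 1)
                = (D.rightExchange n).W (n + 1) + (D.rightExchange n).Δ (n + 1) from rfl,
              ih, if_pos rfl, if_neg (by omega : ¬ (n + 1 + 1 : ℕ) = n + 1),
              show D.W (n + 1 + 1) = D.W n + D.Δ n + D.Δ (n + 1) from rfl]
            simp only [Diagram.Δ, Diagram.rightExchange, if_pos rfl,
              if_neg (by omega : ¬ (n + 1 : ℕ) = n)]
            simp only [if_true]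
            ring
          · rw [show (D.rightExchange n).W (k + 1) = (D.rightExchange n).W k + (D.rightExchange n).Δ k from rfl,
              ih, if_neg h2, if_neg (by omega : ¬ k + 1 = n + 1),
              show D.W (k + 1) = D.W k + D.Δ k from rfl]
            simp [Diagram.Δ, Diagram.rightExchange, h1, h2]
    intro m hm
    have hmN : m < D.N := hm
    rcases eq_or_ne m n with h1 | h1
    · have hv := hD (n + 1) (by omega)
      have hWn1 : D.W (n + 1) = D.W n + D.Δ n := rfl
      have hO : D.O n ≤ D.H (n + 1) + D.I n := by omega
      simp only [h1]
      rw [hW, if_neg (by omega : ¬ (n : ℕ) = n + 1)]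
      show ((((D.rightExchange n).H n + (D.rightExchange n).I n : ℕ)) : ℤ) ≤ D.W n
      simp only [Diagram.rightExchange, if_pos rfl]
      rw [hWn1] at hv
      simp only [Diagram.Δ] at hv
      push_cast [Nat.cast_sub hO]
      omega
    · rcases eq_or_ne m (n + 1) with h2 | h2
      · have hv := hD (n + 1) (by omega)
        have hv0 := hD n (by omega)
        have hWn1 : D.W (n + 1) = D.W n + D.Δ n := rfl
        simp only [h2]
        rw [hW, if_pos rfl]
        show ((((D.rightExchange n).H (n + 1) + (D.rightExchange n).I (n + 1) : ℕ)) : ℤ) ≤ _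
        simp only [Diagram.rightExchange, if_pos rfl, if_neg (by omega : ¬ (n + 1 : ℕ) = n)]
        rw [hWn1] at hv
        simp only [Diagram.Δ] at hv ⊢
        push_cast
        omega
      · have hv := hD m hmN
        rw [hW, if_neg h2]
        show ((((D.rightExchange n).H m + (D.rightExchange n).I m : ℕ)) : ℤ) ≤ D.W m
        simp only [Diagram.rightExchange, if_neg h1, if_neg h2]
        exact hv
  · rintro ⟨hn, hadm⟩
    have hW : ∀ m, (D.leftExchange n).W m =
        if m = n + 1 then D.W n + D.Δ (n + 1) else D.W m := by
      intro m
      induction m with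
      | zero => simp [Diagram.W, Diagram.leftExchange]
      | succ k ih =>
        rcases eq_or_ne k n with h1 | h1
        · rw [h1] at ih ⊢
          rw [show (D.leftExchange n).W (n + 1) = (D.leftExchange n).W n + (D.leftExchange n).Δ n from rfl,
            ih, if_neg (by omega : ¬ (n : ℕ) = n + 1), if_pos rfl]
          simp [Diagram.Δ, Diagram.leftExchange]
        · rcases eq_or_ne k (n + 1) with h2 | h2
          · rw [h2] at ih ⊢
            rw [show (D.leftExchange n).W (n + 1 + 1)
                = (D.leftExchange n).W (n + 1) + (D.leftExchange n).Δ (n + 1) from rfl,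
              ih, if_pos rfl, if_neg (by omega : ¬ (n + 1 + 1 : ℕ) = n + 1),
              show D.W (n + 1 + 1) = D.W n + D.Δ n + D.Δ (n + 1) from rfl]
            simp only [Diagram.Δ, Diagram.leftExchange, if_pos rfl,
              if_neg (by omega : ¬ (n + 1 : ℕ) = n)]
            simp only [if_true]
            ring
          · rw [show (D.leftExchange n).W (k + 1) = (D.leftExchange n).W k + (D.leftExchange n).Δ k from rfl,
              ih, if_neg h2, if_neg (by omega : ¬ k + 1 = n + 1),
              show D.W (k + 1) = D.W k + D.Δ k from rfl]
            simp [Diagram.Δ, Diagram.leftExchange, h1, h2]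
    intro m hm
    have hmN : m < D.N := hm
    rcases eq_or_ne m n with h1 | h1
    · have hv0 := hD n (by omega)
      simp only [h1]
      rw [hW, if_neg (by omega : ¬ (n : ℕ) = n + 1)]
      show ((((D.leftExchange n).H n + (D.leftExchange n).I n : ℕ)) : ℤ) ≤ D.W n
      simp only [Diagram.leftExchange, if_pos rfl]
      push_cast
      omega
    · rcases eq_or_ne m (n + 1) with h2 | h2
      · have hv0 := hD n (by omega)
        have hI : D.I (n + 1) ≤ D.H n + D.O (n + 1) := by omega
        simp only [h2]
        rw [hW, if_pos rfl]
        show ((((D.leftExchange n).H (n + 1) + (D.leftExchange n).I (n + 1) : ℕ)) : ℤ) ≤ _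
        simp only [Diagram.leftExchange, if_pos rfl, if_neg (by omega : ¬ (n + 1 : ℕ) = n)]
        simp only [Diagram.Δ]
        push_cast [Nat.cast_sub hI]
        omega
      · have hv := hD m hmN
        rw [hW, if_neg h2]
        show ((((D.leftExchange n).H m + (D.leftExchange n).I m : ℕ)) : ℤ) ≤ D.W m
        simp only [Diagram.leftExchange, if_neg h1, if_neg h2]
        exact hv
end

section
/- The right exchange relation is locally confluent on valid diagrams: if D is a valid diagram and D →R E and D →R F, then there exists a diagram K with E →R* K and F →R* K. -/
open Diagram

theorem Diagram.ext' {D E : Diagram} (hS : D.S = E.S) (hN : D.N = E.N)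
    (hH : ∀ m, D.H m = E.H m) (hI : ∀ m, D.I m = E.I m) (hO : ∀ m, D.O m = E.O m) :
    D = E := by
  cases D; cases E
  simp only [Diagram.mk.injEq]
  exact ⟨hS, hN, funext hH, funext hI, funext hO⟩

lemma rightStep_of (D : Diagram) (n : ℕ) (h : D.AdmitsRight n) :
    RightStep D (D.rightExchange n) := ⟨n, h, rfl⟩

lemma rex_N (D : Diagram) (n : ℕ) : (D.rightExchange n).N = D.N := rfl

lemma rex_H (D : Diagram) (n k : ℕ) : (D.rightExchange n).H k =
    if k = n then D.H (n + 1) + D.I n - D.O n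
    else if k = n + 1 then D.H n else D.H k := rfl

lemma rex_I (D : Diagram) (n k : ℕ) : (D.rightExchange n).I k =
    if k = n then D.I (n + 1) else if k = n + 1 then D.I n else D.I k := rfl

lemma rex_O (D : Diagram) (n k : ℕ) : (D.rightExchange n).O k =
    if k = n then D.O (n + 1) else if k = n + 1 then D.O n else D.O k := rfl

set_option maxHeartbeats 1600000 in
lemma key_confluence (D : Diagram) (m n : ℕ) (hmn : m ≤ n)
    (hm : D.AdmitsRight m) (hn : D.AdmitsRight n) :
    ∃ K : Diagram, Relation.ReflTransGen RightStep (D.rightExchange m) K ∧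
      Relation.ReflTransGen RightStep (D.rightExchange n) K := by
  obtain ⟨hm1, hm2⟩ := hm
  obtain ⟨hn1, hn2⟩ := hn
  rcases eq_or_lt_of_le hmn with rfl | hlt
  · exact ⟨D.rightExchange m, Relation.ReflTransGen.refl, Relation.ReflTransGen.refl⟩
  by_cases heq : n = m + 1
  · -- hexagon case: n = m + 1
    subst heq
    have hmE : (D.rightExchange m).AdmitsRight (m+1) := by
      refine ⟨by simp only [rex_N]; exact hn1, ?_⟩
      simp only [rex_H, rex_I, rex_O]
      split_ifs <;> omega
    have hmE2 : ((D.rightExchange m).rightExchange (m+1)).AdmitsRight m := by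
      refine ⟨by simp only [rex_N]; omega, ?_⟩
      simp only [rex_H, rex_I, rex_O]
      split_ifs <;> omega
    have hmF : (D.rightExchange (m+1)).AdmitsRight m := by
      refine ⟨by simp only [rex_N]; omega, ?_⟩
      simp only [rex_H, rex_I, rex_O]
      split_ifs <;> omega
    have hmF2 : ((D.rightExchange (m+1)).rightExchange m).AdmitsRight (m+1) := by
      refine ⟨by simp only [rex_N]; exact hn1, ?_⟩
      simp only [rex_H, rex_I, rex_O]
      split_ifs <;> omega
    have hKeq : ((D.rightExchange (m+1)).rightExchange m).rightExchange (m+1)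
        = ((D.rightExchange m).rightExchange (m+1)).rightExchange m := by
      refine Diagram.ext' rfl rfl ?_ ?_ ?_ <;>
        · intro k
          simp only [rex_H, rex_I, rex_O]
          split_ifs <;> omega
    refine ⟨((D.rightExchange m).rightExchange (m+1)).rightExchange m, ?_, ?_⟩
    · exact Relation.ReflTransGen.tail
        (Relation.ReflTransGen.single (rightStep_of _ (m+1) hmE))
        (rightStep_of _ m hmE2)
    · rw [← hKeq]
      exact Relation.ReflTransGen.tail
        (Relation.ReflTransGen.single (rightStep_of _ m hmF))
        (rightStep_of _ (m+1) hmF2)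
  · -- disjoint case: m + 1 < n
    have hlt2 : m + 1 < n := by omega
    have hnE : (D.rightExchange m).AdmitsRight n := by
      refine ⟨by simp only [rex_N]; exact hn1, ?_⟩
      simp only [rex_H, rex_I, rex_O]
      split_ifs <;> omega
    have hmF : (D.rightExchange n).AdmitsRight m := by
      refine ⟨by simp only [rex_N]; omega, ?_⟩
      simp only [rex_H, rex_I, rex_O]
      split_ifs <;> omega
    have hKeq : (D.rightExchange n).rightExchange m
        = (D.rightExchange m).rightExchange n := by
      refine Diagram.ext' rfl rfl ?_ ?_ ?_ <;>
        · intro k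
          simp only [rex_H, rex_I, rex_O]
          split_ifs <;> omega
    refine ⟨(D.rightExchange m).rightExchange n,
      Relation.ReflTransGen.single (rightStep_of _ n hnE), ?_⟩
    rw [← hKeq]
    exact Relation.ReflTransGen.single (rightStep_of _ m hmF)


/-- local confluence of the right exchange relation on valid diagrams. -/
theorem rightStep_locally_confluent (D E F : Diagram) (hD : D.Valid)
    (hE : RightStep D E) (hF : RightStep D F) :
    ∃ K : Diagram, Relation.ReflTransGen RightStep E K ∧
      Relation.ReflTransGen RightStep F K := by

  obtain ⟨m, hm, rfl⟩ := hE
  obtain ⟨n, hn, rfl⟩ := hF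
  rcases le_total m n with h | h
  · exact key_confluence D m n h hm hn
  · obtain ⟨K, h1, h2⟩ := key_confluence D n m h hn hm
    exact ⟨K, h2, h1⟩
end

section
/- Let s : ℕ → ℕ → ℕ satisfy s(2, w) = 0 for all w, and s(n, w) = w·(n − 2) + s(n − 1, w + 1) for all n ≥ 3 and all w (the cost recurrence for reducing the spiral diagram S_n to its normal form). Then for all n ≥ 2 and all w, s(n, w) = (n − 1)·(n − 2)·(n − 3 + 3w)/6; in particular s(n, 1) = binomial(n, 3), so the spiral diagram S_n reduces to its right normal form in exactly binomial(n, 3) right exchanges. -/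
/-- closed form of the cost recurrence for reducing the spiral diagram
`S_n` to its normal form; in particular `s n 1 = choose n 3`. -/
theorem spiral_reduction_length (s : ℕ → ℕ → ℕ)
    (hbase : ∀ w, s 2 w = 0)
    (hrec : ∀ n, 3 ≤ n → ∀ w, s n w = w * (n - 2) + s (n - 1) (w + 1)) :
    ∀ n, 2 ≤ n → ∀ w,
      s n w = (n - 1) * (n - 2) * (n - 3 + 3 * w) / 6 ∧
      s n 1 = Nat.choose n 3 := by
  have aux : ∀ n, 2 ≤ n → ∀ w, 6 * s n w = (n - 1) * (n - 2) * (n - 3 + 3 * w) := by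
    intro n hn
    induction n, hn using Nat.le_induction with
    | base => intro w; simp [hbase]
    | succ n hn ih =>
      intro w
      obtain ⟨k, rfl⟩ : ∃ k, n = k + 2 := ⟨n - 2, by omega⟩
      rw [hrec (k + 2 + 1) (by omega) w]
      have h := ih (w + 1)
      have h1 : k + 2 + 1 - 1 = k + 2 := by omega
      have h2 : k + 2 + 1 - 2 = k + 1 := by omega
      have h3 : k + 2 + 1 - 3 = k := by omega
      have hrhs : (k + 2 - 1) * (k + 2 - 2) * (k + 2 - 3 + 3 * (w + 1))
          = (k + 1) * k * (k + 2 + 3 * w) := by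
        rcases k with _ | m
        · simp
        · have e1 : m + 1 + 2 - 1 = m + 2 := by omega
          have e2 : m + 1 + 2 - 2 = m + 1 := by omega
          have e3 : m + 1 + 2 - 3 + 3 * (w + 1) = m + 3 + 3 * w := by omega
          rw [e1, e2, e3]; try ring
      rw [hrhs] at h
      rw [h1, h2, h3, Nat.mul_add, h]
      ring
  intro n hn w
  have h := aux n hn w
  have hdvd : (6 : ℕ) ∣ (n - 1) * (n - 2) * (n - 3 + 3 * w) := ⟨s n w, h.symm⟩
  have hd := Nat.div_mul_cancel hdvd
  refine ⟨by omega, ?_⟩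
  have h1 := aux n hn 1
  have h8 : (n - 1) * (n - 2) * (n - 3 + 3 * 1) = n * (n - 1) * (n - 2) := by
    obtain ⟨k, rfl⟩ : ∃ k, n = k + 2 := ⟨n - 2, by omega⟩
    rcases k with _ | m
    · simp
    · have e1 : m + 1 + 2 - 1 = m + 2 := by omega
      have e2 : m + 1 + 2 - 2 = m + 1 := by omega
      have e3 : m + 1 + 2 - 3 + 3 * 1 = m + 3 := by omega
      rw [e1, e2, e3]; try ring
  rw [h8] at h1
  have hc : Nat.choose n 3 = n * (n - 1) * (n - 2) / 6 := by
    rw [Nat.choose_eq_descFactorial_div_factorial]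
    congr 1
    rcases n with _ | _ | m
    · simp
    · simp
    · simp [Nat.descFactorial]; ring
  have hd2 : n * (n - 1) * (n - 2) / 6 * 6 = n * (n - 1) * (n - 2) :=
    Nat.div_mul_cancel ⟨s n 1, h1.symm⟩
  rw [hc]
  omega
end

section
/- Let m ≥ 1 and let a₀, …, a_{m−1} be integers, each belonging to {−1, 0, 1}, with a₀ + ⋯ + a_{m−1} = 2 (the rotation numbers encountered when traversing a simple face of a string diagram in direct orientation). Call an index j ∈ {0, …, m−1} eliminable when every partial sum a_j + a_{j+1} + ⋯ + a_{j+t} (for 0 ≤ t ≤ m−1, indices taken modulo m) is nonzero. Then exactly two indices are eliminable. (In any simple face of a string diagram there are exactly two eliminable edges.) -/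
/-- given cyclic rotation numbers in `{-1,0,1}` summing to `2`, exactly
two starting indices have all their partial sums nonzero (exactly two eliminable
edges in a simple face). -/
theorem two_eliminable_edges (m : ℕ) (hm : 1 ≤ m) (a : ℕ → ℤ)
    (ha : ∀ i < m, a i = -1 ∨ a i = 0 ∨ a i = 1)
    (hsum : ∑ i ∈ Finset.range m, a i = 2) :
    {j | j < m ∧ ∀ t < m,
        (∑ i ∈ Finset.range (t + 1), a ((j + i) % m)) ≠ 0}.ncard = 2 := by
  classical
  set Q : ℕ → ℤ := fun n => ∑ i ∈ Finset.range n, a (i % m) with hQdef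
  have hstep : ∀ n, Q (n + 1) = Q n + a (n % m) := by
    intro n; simp [hQdef, Finset.sum_range_succ]
  have hsa : ∀ n : ℕ, a (n % m) = -1 ∨ a (n % m) = 0 ∨ a (n % m) = 1 :=
    fun n => ha (n % m) (Nat.mod_lt n hm)
  have hper : ∀ n, Q (n + m) = Q n + 2 := by
    intro n
    induction n with
    | zero =>
      have h0 : Q 0 = 0 := by simp [hQdef]
      have h1 : Q m = 2 := by
        rw [hQdef]
        calc (∑ i ∈ Finset.range m, a (i % m)) = ∑ i ∈ Finset.range m, a i :=
          Finset.sum_congr rfl fun i hi => by rw [Nat.mod_eq_of_lt (Finset.mem_range.mp hi)]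
        _ = 2 := hsum
      simpa [h0] using h1
    | succ n ih =>
      have he : n + 1 + m = (n + m) + 1 := by omega
      rw [he, hstep, ih, hstep, Nat.add_mod_right]
      ring
  have hmul : ∀ q r : ℕ, Q (r + q * m) = Q r + 2 * q := by
    intro q
    induction q with
    | zero => simp
    | succ q ih =>
      intro r
      have he : r + (q + 1) * m = (r + q * m) + m := by ring
      rw [he, hper, ih]; push_cast; ring
  have hQmod : ∀ n, Q n = Q (n % m) + 2 * (n / m) := by
    intro n
    conv_lhs => rw [show n = n % m + (n / m) * m from (Nat.mod_add_div' n m).symm]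
    exact hmul (n / m) (n % m)
  -- discrete intermediate value theorem (upward)
  have hivt : ∀ (v : ℤ) (j k : ℕ), j ≤ k → Q j < v → v ≤ Q k →
      ∃ n, j < n ∧ n ≤ k ∧ Q n = v := by
    intro v j k
    induction k with
    | zero =>
      intro hjk h1 h2
      have : j = 0 := Nat.le_zero.mp hjk
      subst this; omega
    | succ k ih =>
      intro hjk h1 h2
      by_cases hq : Q k < v
      · refine ⟨k + 1, ?_, le_refl _, ?_⟩
        · rcases Nat.lt_or_ge j (k + 1) with h | h
          · exact h
          · exfalso; have : j = k + 1 := by omega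
            subst this; omega
        · have h3 := hstep k
          rcases hsa k with h | h | h <;> omega
      · push_neg at hq
        have hjk' : j ≤ k := by
          rcases Nat.lt_or_ge j (k + 1) with h | h
          · omega
          · exfalso; have : j = k + 1 := by omega
            subst this; omega
        obtain ⟨n, h1', h2', h3'⟩ := ih hjk' h1 hq
        exact ⟨n, h1', Nat.le_succ_of_le h2', h3'⟩
  have hne : (Finset.range m).Nonempty := ⟨0, Finset.mem_range.mpr hm⟩
  set μ := (Finset.range m).inf' hne Q with hμdef
  have hμle : ∀ j < m, μ ≤ Q j := fun j hj => Finset.inf'_le Q (Finset.mem_range.mpr hj)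
  obtain ⟨j0, hj0m, hj0⟩ := Finset.exists_mem_eq_inf' hne Q
  rw [Finset.mem_range] at hj0m
  have hAμ : Q j0 = μ := hj0.symm
  have hge : ∀ n, m ≤ n → μ + 2 ≤ Q n := by
    intro n hn
    have h1 := hQmod n
    have h2 := hμle (n % m) (Nat.mod_lt n hm)
    have h3 : 1 ≤ n / m := (Nat.one_le_div_iff hm).mpr hn
    have h3' : (1 : ℤ) ≤ (n / m : ℕ) := by exact_mod_cast h3
    linarith
  have hatt : ∀ v : ℤ, v ≤ μ + 1 → ∀ n, Q n = v → n < m := by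
    intro v hv n hn
    by_contra h
    have := hge n (le_of_not_gt h)
    omega
  have hgood : ∀ v : ℤ, v ≤ μ + 1 → (∃ n, Q n = v) →
      ∃ g, Q g = v ∧ (∀ n, Q n = v → n ≤ g) ∧ ∀ k, g < k → v < Q k := by
    rintro v hv ⟨n0, hn0⟩
    have hne' : ((Finset.range m).filter (fun n => Q n = v)).Nonempty :=
      ⟨n0, Finset.mem_filter.mpr ⟨Finset.mem_range.mpr (hatt v hv n0 hn0), hn0⟩⟩
    set g := Finset.max' _ hne' with hgdef
    have hgmem := Finset.max'_mem _ hne'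
    rw [Finset.mem_filter, Finset.mem_range] at hgmem
    have hmax : ∀ n, Q n = v → n ≤ g := fun n hn =>
      Finset.le_max' _ n (Finset.mem_filter.mpr ⟨Finset.mem_range.mpr (hatt v hv n hn), hn⟩)
    refine ⟨g, hgmem.2, hmax, ?_⟩
    intro k hk
    have hne2 : Q k ≠ v := fun h => absurd (hmax k h) (by omega)
    by_contra hle
    push_neg at hle
    have hlt : Q k < v := lt_of_le_of_ne hle hne2
    have hN : Q (g + (k + 1) * m) = v + 2 * (k + 1) := by
      rw [hmul, hgmem.2]; push_cast; ring
    have hk1 : k + 1 ≤ (k + 1) * m := Nat.le_mul_of_pos_right (k + 1) (by omega)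
    have hklt : k ≤ g + (k + 1) * m := by omega
    have h0 : (0 : ℤ) ≤ 2 * ((k : ℤ) + 1) := by positivity
    obtain ⟨n, hn1, hn2, hn3⟩ := hivt v k (g + (k + 1) * m) hklt hlt
      (by rw [hN]; linarith)
    have := hmax n hn3
    omega
  obtain ⟨g0, hg0v, hg0max, hg0lad⟩ := hgood μ (by omega) ⟨j0, hAμ⟩
  have hg0m : g0 < m := hatt μ (by omega) g0 hg0v
  have hμ1 : ∃ n, Q n = μ + 1 := by
    have h1 : Q j0 < μ + 1 := by omega
    have h2 : μ + 1 ≤ Q (j0 + m) := by rw [hper]; omega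
    obtain ⟨n, _, _, h3⟩ := hivt (μ + 1) j0 (j0 + m) (Nat.le_add_right _ _) h1 h2
    exact ⟨n, h3⟩
  obtain ⟨g1, hg1v, hg1max, hg1lad⟩ := hgood (μ + 1) (le_refl _) hμ1
  have hg1m : g1 < m := hatt (μ + 1) (le_refl _) g1 hg1v
  have htrans : ∀ j s : ℕ, (∑ i ∈ Finset.range s, a ((j + i) % m)) = Q (j + s) - Q j := by
    intro j s
    induction s with
    | zero => simp
    | succ s ih =>
      rw [Finset.sum_range_succ, ih, show j + (s + 1) = (j + s) + 1 from rfl, hstep]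
      ring
  have hset : {j | j < m ∧ ∀ t < m,
      (∑ i ∈ Finset.range (t + 1), a ((j + i) % m)) ≠ 0} = {g0, g1} := by
    ext j
    simp only [Set.mem_setOf_eq, Set.mem_insert_iff, Set.mem_singleton_iff]
    constructor
    · rintro ⟨hjm, hcond⟩
      have hE : ∀ k, j < k → k ≤ j + m → Q k ≠ Q j := by
        intro k hk1 hk2 h
        have ht : k - j - 1 < m := by omega
        have h0 := hcond (k - j - 1) ht
        rw [htrans] at h0
        apply h0
        rw [show j + (k - j - 1 + 1) = k by omega, h]
        ring
      have hL : ∀ k, j < k → Q j < Q k := by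
        intro k
        induction k using Nat.strong_induction_on with
        | _ k ih =>
          intro hk
          by_cases hkm : k ≤ j + m
          · rcases lt_trichotomy (Q k) (Q j) with h | h | h
            · exfalso
              obtain ⟨n, hn1, hn2, hn3⟩ := hivt (Q j) k (j + m) hkm h (by rw [hper]; omega)
              exact hE n (by omega) hn2 hn3
            · exact absurd h (hE k hk hkm)
            · exact h
          · have h1 : j < k - m := by omega
            have h2 := ih (k - m) (by omega) h1
            have h3 : Q ((k - m) + m) = Q (k - m) + 2 := hper _
            rw [Nat.sub_add_cancel (by omega)] at h3
            omega
      have hub : Q j ≤ μ + 1 := by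
        have h1 : Q (g0 + m) = μ + 2 := by rw [hper, hg0v]
        have h2 := hL (g0 + m) (by omega)
        omega
      have hlb : μ ≤ Q j := hμle j hjm
      rcases (by omega : Q j = μ ∨ Q j = μ + 1) with h | h
      · left
        have h1 : j ≤ g0 := hg0max j h
        rcases Nat.lt_or_ge j g0 with h2 | h2
        · exfalso; have := hL g0 h2; omega
        · omega
      · right
        have h1 : j ≤ g1 := hg1max j h
        rcases Nat.lt_or_ge j g1 with h2 | h2
        · exfalso; have := hL g1 h2; omega
        · omega
    · rintro (rfl | rfl)
      · refine ⟨hg0m, fun t ht => ?_⟩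
        rw [htrans]
        have h2 := hg0lad (j + (t + 1)) (by omega)
        omega
      · refine ⟨hg1m, fun t ht => ?_⟩
        rw [htrans]
        have h2 := hg1lad (j + (t + 1)) (by omega)
        omega
  rw [hset, Set.ncard_pair (by intro h; rw [h] at hg0v; omega)]
end

section
/- Let r : A →R* B be a funnel reduction on a linear diagram such that A or B is collapsible. Then the trajectory of heights of every non-final vertex along r is monotone (either non-decreasing or non-increasing throughout r). -/
open Diagram

namespace FTM

/-! ### swapAt lemmas -/

lemma swapAt_def (n h : ℕ) : swapAt n h = if h = n then n + 1 else if h = n + 1 then n else h := rfl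

lemma swapAt_lt {n h N : ℕ} (hn : n + 1 < N) (hh : h < N) : swapAt n h < N := by
  rw [swapAt_def]; split_ifs <;> omega

lemma swapAt_invol (n h : ℕ) : swapAt n (swapAt n h) = h := by
  rw [swapAt_def, swapAt_def]; split_ifs <;> omega

lemma swapAt_inj {n h h' : ℕ} (e : swapAt n h = swapAt n h') : h = h' := by
  have h1 := swapAt_invol n h
  have h2 := swapAt_invol n h'
  rw [e] at h1; omega

lemma swapAt_ne {n h : ℕ} (h1 : h ≠ n) (h2 : h ≠ n + 1) : swapAt n h = h := by
  rw [swapAt_def]; split_ifs <;> omega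

lemma swapAt_left (n : ℕ) : swapAt n n = n + 1 := by rw [swapAt_def]; simp

lemma swapAt_right (n : ℕ) : swapAt n (n+1) = n := by
  rw [swapAt_def]; split_ifs <;> omega

/-! ### rightExchange field lemmas -/

lemma rexN (D : Diagram) (n : ℕ) : (D.rightExchange n).N = D.N := rfl

lemma rexH_at (D : Diagram) (n : ℕ) : (D.rightExchange n).H n = D.H (n+1) + D.I n - D.O n := by
  simp [Diagram.rightExchange]

lemma rexH_at1 (D : Diagram) (n : ℕ) : (D.rightExchange n).H (n+1) = D.H n := by
  simp [Diagram.rightExchange]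

lemma rexH_ne (D : Diagram) {n m : ℕ} (h1 : m ≠ n) (h2 : m ≠ n + 1) :
    (D.rightExchange n).H m = D.H m := by
  simp [Diagram.rightExchange, h1, h2]

lemma rexI_at (D : Diagram) (n : ℕ) : (D.rightExchange n).I n = D.I (n+1) := by
  simp [Diagram.rightExchange]

lemma rexI_at1 (D : Diagram) (n : ℕ) : (D.rightExchange n).I (n+1) = D.I n := by
  simp [Diagram.rightExchange]

lemma rexI_ne (D : Diagram) {n m : ℕ} (h1 : m ≠ n) (h2 : m ≠ n + 1) :
    (D.rightExchange n).I m = D.I m := by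
  simp [Diagram.rightExchange, h1, h2]

lemma rexO_at (D : Diagram) (n : ℕ) : (D.rightExchange n).O n = D.O (n+1) := by
  simp [Diagram.rightExchange]

lemma rexO_at1 (D : Diagram) (n : ℕ) : (D.rightExchange n).O (n+1) = D.O n := by
  simp [Diagram.rightExchange]

lemma rexO_ne (D : Diagram) {n m : ℕ} (h1 : m ≠ n) (h2 : m ≠ n + 1) :
    (D.rightExchange n).O m = D.O m := by
  simp [Diagram.rightExchange, h1, h2]

/-! ### The wire profile between the two final vertices -/

/-- A profile of a wire running from an output of the vertex at height `p` down to
an input of the vertex at height `q`, recorded by its column `c l` at each level `l`. -/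
def IsProf (D : Diagram) (p q : ℕ) (c : ℕ → ℕ) : Prop :=
  p < q ∧
  (D.H p ≤ c (p+1) ∧ c (p+1) < D.H p + D.O p) ∧
  (D.H q ≤ c q ∧ c q < D.H q + D.I q) ∧
  ∀ m, p < m → m < q →
    ((c m < D.H m ∧ c (m+1) = c m) ∨
     (D.H m + D.I m ≤ c m ∧ c (m+1) + D.I m = c m + D.O m))

/-- Two vertices joined by a wire cannot be exchanged. -/
lemma blocked {D : Diagram} {p : ℕ} {c : ℕ → ℕ} (hc : IsProf D p (p+1) c) :
    ¬ D.AdmitsRight p := by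
  rintro ⟨-, hadm⟩
  obtain ⟨-, ⟨h1, h2⟩, ⟨h3, h4⟩, -⟩ := hc
  omega

/-- The profile is preserved by any admissible right exchange. -/
lemma prof_step {D : Diagram} {s p q : ℕ} {c : ℕ → ℕ}
    (hadm : D.AdmitsRight s) (hc : IsProf D p q c) :
    ∃ c', IsProf (D.rightExchange s) (swapAt s p) (swapAt s q) c' ∧
      ∀ m, m ≠ s + 1 → c' m = c m := by
  obtain ⟨hsN, hHs⟩ := hadm
  obtain ⟨hpq, ⟨ha1, ha2⟩, ⟨hb1, hb2⟩, hband⟩ := hc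
  rcases (by omega : s + 1 < p ∨ s + 1 = p ∨ (s = p ∧ q = s + 1) ∨ (s = p ∧ s + 1 < q)
      ∨ (p < s ∧ s + 1 < q) ∨ (p < s ∧ s + 1 = q) ∨ s = q ∨ q < s) with
    h | h | h | h | h | h | h | h
  -- in each case we provide translation equations and let omega finish
  case inl => -- C1 below band
    have hp' : swapAt s p = p := swapAt_ne (by omega) (by omega)
    have hq' : swapAt s q = q := swapAt_ne (by omega) (by omega)
    refine ⟨c, ⟨by omega, ?_, ?_, ?_⟩, fun m _ => rfl⟩
    · have e1 := rexH_ne D (by omega : p ≠ s) (by omega : p ≠ s + 1)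
      have e2 := rexO_ne D (by omega : p ≠ s) (by omega : p ≠ s + 1)
      rw [hp', e1, e2]; exact ⟨ha1, ha2⟩
    · have e1 := rexH_ne D (by omega : q ≠ s) (by omega : q ≠ s + 1)
      have e2 := rexI_ne D (by omega : q ≠ s) (by omega : q ≠ s + 1)
      rw [hq', e1, e2]; exact ⟨hb1, hb2⟩
    · rw [hp', hq']; intro m hm1 hm2
      rw [rexH_ne D (by omega) (by omega), rexI_ne D (by omega) (by omega),
        rexO_ne D (by omega) (by omega)]
      exact hband m hm1 hm2
  case inr.inl => -- C3 : s + 1 = p, lower final moves down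
    have hp' : swapAt s p = s := by rw [← h, swapAt_right]
    have hq' : swapAt s q = q := swapAt_ne (by omega) (by omega)
    have hP1 : c (p + 1) = c (s + 2) := by rw [← h]
    have hHp : D.H p = D.H (s+1) := by rw [← h]
    have hOp : D.O p = D.O (s+1) := by rw [← h]
    set c' : ℕ → ℕ := Function.update c (s+1) (c (s+2) + D.I s - D.O s) with hc'
    have u1 : ∀ m, m ≠ s + 1 → c' m = c m := fun m hm => Function.update_of_ne hm _ _
    have u2 : c' (s+1) = c (s+2) + D.I s - D.O s := Function.update_self _ _ _
    refine ⟨c', ⟨by omega, ?_, ?_, ?_⟩, u1⟩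
    · rw [hp', rexH_at, rexO_at]
      have e3 : c' (s + 1) = c (s+2) + D.I s - D.O s := u2
      omega
    · have e1 := rexH_ne D (by omega : q ≠ s) (by omega : q ≠ s + 1)
      have e2 := rexI_ne D (by omega : q ≠ s) (by omega : q ≠ s + 1)
      have e3 := u1 q (by omega)
      rw [hq', e1, e2, e3]; exact ⟨hb1, hb2⟩
    · rw [hp', hq']; intro m hm1 hm2
      rcases (by omega : s + 1 = m ∨ s + 1 < m) with hm | hm
      · subst hm
        have e1 := rexH_at1 D s
        have e2 := rexI_at1 D s
        have e3 := rexO_at1 D s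
        have e4 : c' (s + 1 + 1) = c (s + 1 + 1) := u1 _ (by omega)
        have e5 : c (s + 1 + 1) = c (s + 2) := rfl
        omega
      · have e1 := rexH_ne D (by omega : m ≠ s) (by omega : m ≠ s + 1)
        have e2 := rexI_ne D (by omega : m ≠ s) (by omega : m ≠ s + 1)
        have e3 := rexO_ne D (by omega : m ≠ s) (by omega : m ≠ s + 1)
        have e4 := u1 m (by omega)
        have e5 := u1 (m+1) (by omega)
        have e6 := hband m (by omega) hm2
        omega
  case inr.inr.inl => -- blocked
    exfalso; obtain ⟨h1, h2⟩ := h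
    have := ha1; have := ha2; have := hb1; have := hb2
    subst h1; subst h2; omega
  case inr.inr.inr.inl => -- C4 : s = p, lower final moves up past a band vertex
    obtain ⟨h1, hq⟩ := h
    have hp' : swapAt s p = s + 1 := by rw [← h1, swapAt_left]
    have hq' : swapAt s q = q := swapAt_ne (by omega) (by omega)
    have hHp : D.H p = D.H s := by rw [← h1]
    have hOp : D.O p = D.O s := by rw [← h1]
    have hP1 : c (p + 1) = c (s + 1) := by rw [← h1]
    rw [hHp, hP1] at ha1
    rw [hHp, hOp, hP1] at ha2
    have hbb := hband (s+1) (by omega) hq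
    have hleft : c (s+1+1) = c (s+1) ∧ c (s+1) < D.H (s+1) := by
      rcases hbb with ⟨u, v⟩ | ⟨u, v⟩
      · exact ⟨v, u⟩
      · omega
    refine ⟨c, ⟨by omega, ?_, ?_, ?_⟩, fun m _ => rfl⟩
    · rw [hp', rexH_at1, rexO_at1]
      have e5 : c (s + 1 + 1) = c (s + 2) := rfl
      omega
    · have e1 := rexH_ne D (by omega : q ≠ s) (by omega : q ≠ s + 1)
      have e2 := rexI_ne D (by omega : q ≠ s) (by omega : q ≠ s + 1)
      rw [hq', e1, e2]; exact ⟨hb1, hb2⟩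
    · rw [hp', hq']; intro m hm1 hm2
      rw [rexH_ne D (by omega) (by omega), rexI_ne D (by omega) (by omega),
        rexO_ne D (by omega) (by omega)]
      exact hband m (by omega) hm2
  case inr.inr.inr.inr.inl => -- C6 : interior exchange
    obtain ⟨hps, hsq⟩ := h
    have hp' : swapAt s p = p := swapAt_ne (by omega) (by omega)
    have hq' : swapAt s q = q := swapAt_ne (by omega) (by omega)
    have hbs := hband s (by omega) (by omega)
    have hbs1 := hband (s+1) (by omega) (by omega)
    have hc12 : c (s + 1 + 1) = c (s + 2) := rfl
    -- the AB' combination is impossible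
    have hnotAB : ¬ (c s < D.H s ∧ D.H (s+1) + D.I (s+1) ≤ c (s+1)) := by
      rintro ⟨u, v⟩; omega
    set V : ℕ := if D.H (s+1) + D.I (s+1) ≤ c (s+1) then c s + D.O (s+1) - D.I (s+1) else c s
      with hV
    set c' : ℕ → ℕ := Function.update c (s+1) V with hc'
    have u1 : ∀ m, m ≠ s + 1 → c' m = c m := fun m hm => Function.update_of_ne hm _ _
    have u2 : c' (s+1) = V := Function.update_self _ _ _
    have hVval : (D.H (s+1) + D.I (s+1) ≤ c (s+1) ∧ V + D.I (s+1) = c s + D.O (s+1)) ∨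
        (c (s+1) < D.H (s+1) ∧ V = c s) := by
      rcases hbs1 with ⟨w1, w2⟩ | ⟨w1, w2⟩
      · right; refine ⟨w1, ?_⟩; rw [hV, if_neg (by omega)]
      · left; refine ⟨w1, ?_⟩; rw [hV, if_pos w1]
        rcases hbs with ⟨v1, v2⟩ | ⟨v1, v2⟩ <;> omega
    refine ⟨c', ⟨by omega, ?_, ?_, ?_⟩, u1⟩
    · have e1 := rexH_ne D (by omega : p ≠ s) (by omega : p ≠ s + 1)
      have e2 := rexO_ne D (by omega : p ≠ s) (by omega : p ≠ s + 1)
      have e3 := u1 (p+1) (by omega)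
      rw [hp', e1, e2, e3]; exact ⟨ha1, ha2⟩
    · have e1 := rexH_ne D (by omega : q ≠ s) (by omega : q ≠ s + 1)
      have e2 := rexI_ne D (by omega : q ≠ s) (by omega : q ≠ s + 1)
      have e3 := u1 q (by omega)
      rw [hq', e1, e2, e3]; exact ⟨hb1, hb2⟩
    · rw [hp', hq']; intro m hm1 hm2
      rcases (by omega : s = m ∨ s + 1 = m ∨ (m ≠ s ∧ m ≠ s + 1)) with hm | hm | ⟨w1, w2⟩
      · subst hm
        have e1 := rexH_at D s
        have e2 := rexI_at D s
        have e3 := rexO_at D s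
        have e4 := u1 s (by omega)
        rcases hbs with ⟨v1, v2⟩ | ⟨v1, v2⟩ <;> rcases hVval with ⟨w1, w2⟩ | ⟨w1, w2⟩ <;>
          rcases hbs1 with ⟨x1, x2⟩ | ⟨x1, x2⟩ <;> omega
      · subst hm
        have e1 := rexH_at1 D s
        have e2 := rexI_at1 D s
        have e3 := rexO_at1 D s
        have e4 := u1 (s+1+1) (by omega)
        rcases hbs with ⟨v1, v2⟩ | ⟨v1, v2⟩ <;> rcases hVval with ⟨w1, w2⟩ | ⟨w1, w2⟩ <;>
          rcases hbs1 with ⟨x1, x2⟩ | ⟨x1, x2⟩ <;> omega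
      · have e1 := rexH_ne D w1 w2
        have e2 := rexI_ne D w1 w2
        have e3 := rexO_ne D w1 w2
        have e4 := u1 m w2
        have e5 := u1 (m+1) (by omega)
        have e6 := hband m hm1 hm2
        omega
  case inr.inr.inr.inr.inr.inl => -- C5 : s + 1 = q, upper final moves down
    obtain ⟨hps, hq⟩ := h
    have hp' : swapAt s p = p := swapAt_ne (by omega) (by omega)
    have hq' : swapAt s q = s := by rw [← hq, swapAt_right]
    have hHq : D.H q = D.H (s+1) := by rw [← hq]
    have hIq : D.I q = D.I (s+1) := by rw [← hq]
    have hcq : c q = c (s+1) := by rw [← hq]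
    rw [hHq, hcq] at hb1
    rw [hHq, hIq, hcq] at hb2
    have hbs := hband s (by omega) (by omega)
    have hright : D.H s + D.I s ≤ c s ∧ c (s+1) + D.I s = c s + D.O s := by
      rcases hbs with ⟨u, v⟩ | h'
      · exfalso; omega
      · exact h'
    refine ⟨c, ⟨by omega, ?_, ?_, ?_⟩, fun m _ => rfl⟩
    · have e1 := rexH_ne D (by omega : p ≠ s) (by omega : p ≠ s + 1)
      have e2 := rexO_ne D (by omega : p ≠ s) (by omega : p ≠ s + 1)
      rw [hp', e1, e2]; exact ⟨ha1, ha2⟩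
    · rw [hq', rexH_at, rexI_at]
      omega
    · rw [hp', hq']; intro m hm1 hm2
      rw [rexH_ne D (by omega) (by omega), rexI_ne D (by omega) (by omega),
        rexO_ne D (by omega) (by omega)]
      exact hband m hm1 (by omega)
  case inr.inr.inr.inr.inr.inr.inl => -- C2 : s = q, upper final moves up
    have hp' : swapAt s p = p := swapAt_ne (by omega) (by omega)
    have hq' : swapAt s q = q + 1 := by rw [h]; rw [h] at *; exact swapAt_left q
    have hHq : D.H q = D.H s := by rw [h]
    have hIq : D.I q = D.I s := by rw [h]
    have hcq : c q = c s := by rw [h]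
    set c' : ℕ → ℕ := Function.update c (s+1) (c s) with hc'
    have u1 : ∀ m, m ≠ s + 1 → c' m = c m := fun m hm => Function.update_of_ne hm _ _
    have u2 : c' (s+1) = c s := Function.update_self _ _ _
    refine ⟨c', ⟨by omega, ?_, ?_, ?_⟩, u1⟩
    · have e1 := rexH_ne D (by omega : p ≠ s) (by omega : p ≠ s + 1)
      have e2 := rexO_ne D (by omega : p ≠ s) (by omega : p ≠ s + 1)
      have e3 := u1 (p+1) (by omega)
      rw [hp', e1, e2, e3]; exact ⟨ha1, ha2⟩
    · have e0 : q + 1 = s + 1 := by rw [h]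
      rw [hq', e0, rexH_at1, rexI_at1, u2]
      omega
    · rw [hp', hq']; intro m hm1 hm2
      rcases (by omega : s = m ∨ (m ≠ s ∧ m ≠ s + 1)) with hm | ⟨w1, w2⟩
      · subst hm
        have e1 := rexH_at D s
        have e2 := rexI_at D s
        have e3 := rexO_at D s
        have e4 := u1 s (by omega)
        omega
      · have e1 := rexH_ne D w1 w2
        have e2 := rexI_ne D w1 w2
        have e3 := rexO_ne D w1 w2
        have e4 := u1 m w2
        have e5 := u1 (m+1) (by omega)
        have e6 := hband m hm1 (by omega)
        omega
  case inr.inr.inr.inr.inr.inr.inr => -- C1' above band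
    have hp' : swapAt s p = p := swapAt_ne (by omega) (by omega)
    have hq' : swapAt s q = q := swapAt_ne (by omega) (by omega)
    refine ⟨c, ⟨by omega, ?_, ?_, ?_⟩, fun m _ => rfl⟩
    · have e1 := rexH_ne D (by omega : p ≠ s) (by omega : p ≠ s + 1)
      have e2 := rexO_ne D (by omega : p ≠ s) (by omega : p ≠ s + 1)
      rw [hp', e1, e2]; exact ⟨ha1, ha2⟩
    · have e1 := rexH_ne D (by omega : q ≠ s) (by omega : q ≠ s + 1)
      have e2 := rexI_ne D (by omega : q ≠ s) (by omega : q ≠ s + 1)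
      rw [hq', e1, e2]; exact ⟨hb1, hb2⟩
    · rw [hp', hq']; intro m hm1 hm2
      rw [rexH_ne D (by omega) (by omega), rexI_ne D (by omega) (by omega),
        rexO_ne D (by omega) (by omega)]
      exact hband m hm1 hm2

end FTM
namespace FTM

section Red

variable {A B : Diagram} (r : Reduction A B)

lemma traj_zero (h : ℕ) : r.traj h 0 = h := rfl

lemma traj_succ (h t : ℕ) : r.traj h (t+1) = swapAt (r.steps t) (r.traj h t) := rfl

lemma seq_N : ∀ t, t ≤ r.len → (r.seq t).N = A.N := by
  intro t
  induction t with
  | zero => intro _; rw [r.src]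
  | succ t ih =>
    intro h
    rw [(r.ok t (by omega)).2, rexN, ih (by omega)]

lemma steps_lt (t : ℕ) (ht : t < r.len) : r.steps t + 1 < A.N := by
  have h := (r.ok t ht).1.1
  rwa [seq_N r t (le_of_lt ht)] at h

lemma traj_lt : ∀ t, t ≤ r.len → ∀ h, h < A.N → r.traj h t < A.N := by
  intro t
  induction t with
  | zero => intro _ h hh; exact hh
  | succ t ih =>
    intro ht h hh
    rw [traj_succ]
    exact swapAt_lt (steps_lt r t (by omega)) (ih (by omega) h hh)

lemma traj_inj : ∀ t h h', r.traj h t = r.traj h' t → h = h' := by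
  intro t
  induction t with
  | zero => intro h h' e; exact e
  | succ t ih =>
    intro h h' e
    rw [traj_succ, traj_succ] at e
    exact ih h h' (swapAt_inj e)

lemma traj_surj : ∀ t, t ≤ r.len → ∀ y, y < A.N → ∃ h, h < A.N ∧ r.traj h t = y := by
  intro t
  induction t with
  | zero => intro _ y hy; exact ⟨y, hy, rfl⟩
  | succ t ih =>
    intro ht y hy
    have hs := steps_lt r t (by omega)
    obtain ⟨h, hh, e⟩ := ih (by omega) (swapAt (r.steps t) y) (swapAt_lt hs hy)
    exact ⟨h, hh, by rw [traj_succ, e, swapAt_invol]⟩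

/-- If the relative height order of two vertices flips, they were exchanged. -/
lemma order_flip (i j : ℕ) : ∀ t', t' ≤ r.len → r.traj i 0 < r.traj j 0 →
    r.traj j t' < r.traj i t' →
    ∃ τ, τ < t' ∧ r.traj i τ = r.steps τ ∧ r.traj j τ = r.steps τ + 1 := by
  intro t'
  induction t' with
  | zero => intro _ h1 h2; omega
  | succ t' ih =>
    intro ht h1 h2
    rcases (by omega : r.traj j t' < r.traj i t' ∨ r.traj i t' ≤ r.traj j t') with hlt | hle
    · obtain ⟨τ, hτ, e1, e2⟩ := ih (by omega) h1 hlt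
      exact ⟨τ, by omega, e1, e2⟩
    · have hne : r.traj i t' ≠ r.traj j t' := by
        intro e
        have hij := traj_inj r t' i j e
        subst hij
        omega
      refine ⟨t', by omega, ?_⟩
      have e1 := traj_succ r i t'
      have e2 := traj_succ r j t'
      rw [e1, e2] at h2
      rw [swapAt_def, swapAt_def] at h2
      split_ifs at h2 <;> omega

/-- ExchangeOf is symmetric. -/
lemma exchangeOf_symm {h0 h1 t : ℕ} (h : r.ExchangeOf h0 h1 t) : r.ExchangeOf h1 h0 t := by
  obtain ⟨h1', h2⟩ := h
  exact ⟨h1', h2.symm⟩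

end Red

end FTM
namespace FTM

section Main

variable {A B : Diagram} (r : Reduction A B) (π : ℕ → ℕ) (P Q : ℕ)

/-- The grand invariant: order of finals, wire profile, and side classification. -/
def SideInv (t : ℕ) : Prop :=
  r.traj (π P) t < r.traj (π Q) t ∧
  ∃ c, IsProf (r.seq t) (r.traj (π P) t) (r.traj (π Q) t) c ∧
    ∀ j, j < A.N → j ≠ P → j ≠ Q →
      (π j < π P → r.traj (π j) t < r.traj (π P) t ∨
        (r.traj (π P) t < r.traj (π j) t ∧ r.traj (π j) t < r.traj (π Q) t ∧
         (r.seq t).H (r.traj (π j) t) + (r.seq t).I (r.traj (π j) t) ≤ c (r.traj (π j) t))) ∧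
      (π Q < π j → r.traj (π Q) t < r.traj (π j) t ∨
        (r.traj (π P) t < r.traj (π j) t ∧ r.traj (π j) t < r.traj (π Q) t ∧
         c (r.traj (π j) t) < (r.seq t).H (r.traj (π j) t)))

variable (hN : 2 ≤ A.N)
  (hπlt : ∀ i, i < A.N → π i < A.N)
  (hπinj : ∀ i j, i < A.N → j < A.N → π i = π j → i = j)
  (hPQ : (P = A.N - 2 ∧ Q = A.N - 1) ∨ (P = A.N - 1 ∧ Q = A.N - 2))
  (hπPQ : π P < π Q)
  (hfun : r.IsFunnel π)
  (hfunnel : ∀ j, j < A.N → j ≠ P → j ≠ Q →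
    (∃ τ1, r.ExchangeOf (π j) (π P) τ1) → (∃ τ2, r.ExchangeOf (π j) (π Q) τ2) → False)

include hN hπlt hπinj hPQ hπPQ hfun hfunnel

/-- Preservation of the grand invariant by one step of the reduction. -/
theorem inv_step (t : ℕ) (ht : t < r.len) (ih : SideInv r π P Q t) :
    SideInv r π P Q (t+1) := by
  have hPN : P < A.N := by omega
  have hQN : Q < A.N := by omega
  obtain ⟨hord, c, hprof, hsides⟩ := ih
  obtain ⟨hadm, hseq⟩ := r.ok t ht
  have hsN : r.steps t + 1 < A.N := steps_lt r t ht
  have eP : r.traj (π P) (t+1) = swapAt (r.steps t) (r.traj (π P) t) := traj_succ r _ t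
  have eQ : r.traj (π Q) (t+1) = swapAt (r.steps t) (r.traj (π Q) t) := traj_succ r _ t
  obtain ⟨c', hprof', hc'⟩ := prof_step hadm hprof
  rw [← hseq, ← eP, ← eQ] at hprof'
  have hord' : r.traj (π P) (t+1) < r.traj (π Q) (t+1) := hprof'.1
  have hadmH : (r.seq t).H (r.steps t) + (r.seq t).O (r.steps t) ≤
      (r.seq t).H (r.steps t + 1) := hadm.2
  refine ⟨hord', c', hprof', ?_⟩
  intro j hj hjP hjQ
  have haj : r.traj (π j) t < A.N := traj_lt r t (by omega) _ (hπlt j hj)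
  have hajP : r.traj (π j) t ≠ r.traj (π P) t := by
    intro e; exact hjP (hπinj j P hj hPN (traj_inj r t _ _ e))
  have hajQ : r.traj (π j) t ≠ r.traj (π Q) t := by
    intro e; exact hjQ (hπinj j Q hj hQN (traj_inj r t _ _ e))
  have ea : r.traj (π j) (t+1) = swapAt (r.steps t) (r.traj (π j) t) := traj_succ r _ t
  have hswa : (r.traj (π j) t ≠ r.steps t ∧ r.traj (π j) t ≠ r.steps t + 1 ∧
      r.traj (π j) (t+1) = r.traj (π j) t) ∨
      (r.traj (π j) t = r.steps t ∧ r.traj (π j) (t+1) = r.steps t + 1) ∨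
      (r.traj (π j) t = r.steps t + 1 ∧ r.traj (π j) (t+1) = r.steps t) := by
    rw [ea, swapAt_def]; split_ifs with u1 u2
    · right; left; exact ⟨u1, rfl⟩
    · right; right; exact ⟨u2, rfl⟩
    · left; exact ⟨u1, u2, rfl⟩
  have hswP : (r.traj (π P) t ≠ r.steps t ∧ r.traj (π P) t ≠ r.steps t + 1 ∧
      r.traj (π P) (t+1) = r.traj (π P) t) ∨
      (r.traj (π P) t = r.steps t ∧ r.traj (π P) (t+1) = r.steps t + 1) ∨
      (r.traj (π P) t = r.steps t + 1 ∧ r.traj (π P) (t+1) = r.steps t) := by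
    rw [eP, swapAt_def]; split_ifs with u1 u2
    · right; left; exact ⟨u1, rfl⟩
    · right; right; exact ⟨u2, rfl⟩
    · left; exact ⟨u1, u2, rfl⟩
  have hswQ : (r.traj (π Q) t ≠ r.steps t ∧ r.traj (π Q) t ≠ r.steps t + 1 ∧
      r.traj (π Q) (t+1) = r.traj (π Q) t) ∨
      (r.traj (π Q) t = r.steps t ∧ r.traj (π Q) (t+1) = r.steps t + 1) ∨
      (r.traj (π Q) t = r.steps t + 1 ∧ r.traj (π Q) (t+1) = r.steps t) := by
    rw [eQ, swapAt_def]; split_ifs with u1 u2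
    · right; left; exact ⟨u1, rfl⟩
    · right; right; exact ⟨u2, rfl⟩
    · left; exact ⟨u1, u2, rfl⟩
  obtain ⟨hj1, hj2⟩ := hsides j hj hjP hjQ
  obtain ⟨hpq0, ⟨hst1, hst2⟩, ⟨hen1, hen2⟩, hband⟩ := hprof
  obtain ⟨hpq', ⟨hst1', hst2'⟩, ⟨hen1', hen2'⟩, hband'⟩ := hprof'
  -- universal translation equations
  have gH0 : (r.seq (t+1)).H (r.steps t) =
      (r.seq t).H (r.steps t + 1) + (r.seq t).I (r.steps t) - (r.seq t).O (r.steps t) := by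
    rw [hseq, rexH_at]
  have gI0 : (r.seq (t+1)).I (r.steps t) = (r.seq t).I (r.steps t + 1) := by rw [hseq, rexI_at]
  have gO0 : (r.seq (t+1)).O (r.steps t) = (r.seq t).O (r.steps t + 1) := by rw [hseq, rexO_at]
  have gH1 : (r.seq (t+1)).H (r.steps t + 1) = (r.seq t).H (r.steps t) := by rw [hseq, rexH_at1]
  have gI1 : (r.seq (t+1)).I (r.steps t + 1) = (r.seq t).I (r.steps t) := by rw [hseq, rexI_at1]
  have gO1 : (r.seq (t+1)).O (r.steps t + 1) = (r.seq t).O (r.steps t) := by rw [hseq, rexO_at1]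
  have gc0 : c' (r.steps t) = c (r.steps t) := hc' _ (by omega)
  constructor
  · -- the L side
    intro hg
    have hold := hj1 hg
    rcases hswa with ⟨u1, u2, u3⟩ | ⟨u1, u3⟩ | ⟨u1, u3⟩
    · -- j not moved
      rw [u3]
      have f1 : (r.seq (t+1)).H (r.traj (π j) t) = (r.seq t).H (r.traj (π j) t) := by
        rw [hseq, rexH_ne _ u1 u2]
      have f2 : (r.seq (t+1)).I (r.traj (π j) t) = (r.seq t).I (r.traj (π j) t) := by
        rw [hseq, rexI_ne _ u1 u2]
      have f3 : c' (r.traj (π j) t) = c (r.traj (π j) t) := hc' _ u2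
      rcases hswP with ⟨v1, v2, v3⟩ | ⟨v1, v3⟩ | ⟨v1, v3⟩ <;>
        rcases hswQ with ⟨w1, w2, w3⟩ | ⟨w1, w3⟩ | ⟨w1, w3⟩ <;> omega
    · -- j moves up, from steps t to steps t + 1
      rw [u3]
      rcases hold with hbelow | ⟨b1, b2, b3⟩
      · -- j was below P
        rcases hswP with ⟨v1, v2, v3⟩ | ⟨v1, v3⟩ | ⟨v1, v3⟩
        · -- P unmoved: j stays below P
          left; omega
        · -- P at steps t = position of j: impossible
          omega
        · -- P is at steps t + 1 and moves down: j enters the band from below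
          right
          have fq : r.traj (π Q) (t+1) = r.traj (π Q) t := by
            rcases hswQ with ⟨w1, w2, w3⟩ | ⟨w1, w3⟩ | ⟨w1, w3⟩ <;> omega
          -- new start condition: rewrite its indices to steps t + 1
          have fP1 : r.traj (π P) (t+1) + 1 = r.steps t + 1 := by omega
          rw [fP1, v3] at hst1' hst2'
          rw [v1] at hst1 hst2
          -- goal atoms: H', I' at steps t + 1, c' at steps t + 1
          omega
      · -- j was in the band (left side)
        rcases hswQ with ⟨w1, w2, w3⟩ | ⟨w1, w3⟩ | ⟨w1, w3⟩
        · -- Q not moved: j stays in the band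
          right
          have fp : r.traj (π P) (t+1) = r.traj (π P) t := by
            rcases hswP with ⟨v1, v2, v3⟩ | ⟨v1, v3⟩ | ⟨v1, v3⟩ <;> omega
          have hbm' := hband' (r.steps t) (by omega) (by omega)
          have fP1 : r.traj (π P) (t+1) = r.traj (π P) t := fp
          rw [u1] at b3
          omega
        · -- Q at steps t, j also at steps t: impossible
          omega
        · -- Q at steps t + 1: j exits the band at the top: funnel violation
          exfalso
          obtain ⟨τ, hτ, g1, g2⟩ := order_flip r (π j) (π P) t (by omega) (by exact hg)
            (by omega)
          exact hfunnel j hj hjP hjQ ⟨τ, ⟨by omega, Or.inl ⟨g1, g2⟩⟩⟩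
            ⟨t, ⟨ht, Or.inl ⟨u1, w1⟩⟩⟩
    · -- j moves down, from steps t + 1 to steps t
      rw [u3]
      rcases hold with hbelow | ⟨b1, b2, b3⟩
      · -- j was below P and stays below
        rcases hswP with ⟨v1, v2, v3⟩ | ⟨v1, v3⟩ | ⟨v1, v3⟩
        · left; omega
        · omega
        · omega
      · -- j was in the band (left side)
        rcases hswP with ⟨v1, v2, v3⟩ | ⟨v1, v3⟩ | ⟨v1, v3⟩
        · -- P not moved: j moves down inside the band
          right
          have fq : r.traj (π Q) (t+1) = r.traj (π Q) t := by
            rcases hswQ with ⟨w1, w2, w3⟩ | ⟨w1, w3⟩ | ⟨w1, w3⟩ <;> omega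
          have hbm := hband (r.steps t) (by omega) (by omega)
          rw [u1] at b3
          omega
        · -- P at steps t, j at steps t + 1: left-side exit at the bottom: arithmetic contra
          exfalso
          rw [v1] at hst1 hst2
          rw [u1] at b3
          omega
        · -- P at steps t + 1 = position of j: impossible
          omega
  · -- the U side
    intro hg
    have hold := hj2 hg
    rcases hswa with ⟨u1, u2, u3⟩ | ⟨u1, u3⟩ | ⟨u1, u3⟩
    · -- j not moved
      rw [u3]
      have f1 : (r.seq (t+1)).H (r.traj (π j) t) = (r.seq t).H (r.traj (π j) t) := by
        rw [hseq, rexH_ne _ u1 u2]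
      have f3 : c' (r.traj (π j) t) = c (r.traj (π j) t) := hc' _ u2
      rcases hswP with ⟨v1, v2, v3⟩ | ⟨v1, v3⟩ | ⟨v1, v3⟩ <;>
        rcases hswQ with ⟨w1, w2, w3⟩ | ⟨w1, w3⟩ | ⟨w1, w3⟩ <;> omega
    · -- j moves up
      rw [u3]
      rcases hold with habove | ⟨b1, b2, b3⟩
      · -- j was above Q and stays above
        rcases hswQ with ⟨w1, w2, w3⟩ | ⟨w1, w3⟩ | ⟨w1, w3⟩
        · left; omega
        · omega
        · omega
      · -- j was in the band (right side) moving up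
        rcases hswQ with ⟨w1, w2, w3⟩ | ⟨w1, w3⟩ | ⟨w1, w3⟩
        · -- Q not moved: j stays in the band
          right
          have fp : r.traj (π P) (t+1) = r.traj (π P) t := by
            rcases hswP with ⟨v1, v2, v3⟩ | ⟨v1, v3⟩ | ⟨v1, v3⟩ <;> omega
          have hbm := hband (r.steps t) (by omega) (by omega)
          have hbm' := hband' (r.steps t) (by omega) (by omega)
          rw [u1] at b3
          omega
        · -- Q at steps t = position of j: impossible
          omega
        · -- Q at steps t + 1: j crosses Q from below: funnel violation
          exfalso
          obtain ⟨τ, hτ, g1, g2⟩ := order_flip r (π Q) (π j) t (by omega) (by exact hg)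
            (by omega)
          have ex1 : r.ExchangeOf (π j) (π Q) τ := ⟨by omega, Or.inr ⟨g1, g2⟩⟩
          have ex2 : r.ExchangeOf (π j) (π Q) t := ⟨ht, Or.inl ⟨u1, w1⟩⟩
          have hfin : τ = t := by
            rcases hPQ with ⟨eP', eQ'⟩ | ⟨eP', eQ'⟩
            · exact hfun.1 j (by omega) τ t (Or.inr (eQ' ▸ ex1)) (Or.inr (eQ' ▸ ex2))
            · exact hfun.1 j (by omega) τ t (Or.inl (eQ' ▸ ex1)) (Or.inl (eQ' ▸ ex2))
          omega
    · -- j moves down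
      rw [u3]
      rcases hold with habove | ⟨b1, b2, b3⟩
      · -- j was above Q
        rcases hswQ with ⟨w1, w2, w3⟩ | ⟨w1, w3⟩ | ⟨w1, w3⟩
        · left; omega
        · -- Q is the lower vertex: j enters the band from above
          right
          have fp : r.traj (π P) (t+1) = r.traj (π P) t := by
            rcases hswP with ⟨v1, v2, v3⟩ | ⟨v1, v3⟩ | ⟨v1, v3⟩ <;> omega
          rw [w1] at hen1 hen2
          omega
        · -- Q at steps t + 1 = position of j: impossible
          omega
      · -- j was in the band (right side)
        rcases hswP with ⟨v1, v2, v3⟩ | ⟨v1, v3⟩ | ⟨v1, v3⟩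
        · -- P not moved: j moves down inside the band
          right
          have fq : r.traj (π Q) (t+1) = r.traj (π Q) t := by
            rcases hswQ with ⟨w1, w2, w3⟩ | ⟨w1, w3⟩ | ⟨w1, w3⟩ <;> omega
          have hbm := hband (r.steps t) (by omega) (by omega)
          rw [u1] at b3
          omega
        · -- P at steps t: right-side vertex exits at the bottom: funnel violation
          exfalso
          obtain ⟨τ, hτ, g1, g2⟩ := order_flip r (π Q) (π j) t (by omega) (by exact hg)
            (by omega)
          exact hfunnel j hj hjP hjQ ⟨t, ⟨ht, Or.inr ⟨v1, u1⟩⟩⟩ ⟨τ, ⟨by omega, Or.inr ⟨g1, g2⟩⟩⟩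
        · -- P at steps t + 1 = position of j: impossible
          omega

end Main

end FTM
namespace FTM

section Main2

variable {A B : Diagram} (r : Reduction A B) (π : ℕ → ℕ) (P Q : ℕ)
  (hN : 2 ≤ A.N)
  (hπlt : ∀ i, i < A.N → π i < A.N)
  (hπinj : ∀ i j, i < A.N → j < A.N → π i = π j → i = j)
  (hπsurj : ∀ h, h < A.N → ∃ i, i < A.N ∧ π i = h)
  (hPQ : (P = A.N - 2 ∧ Q = A.N - 1) ∨ (P = A.N - 1 ∧ Q = A.N - 2))
  (hπPQ : π P < π Q)
  (hfun : r.IsFunnel π)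
  (hprof0 : ∃ c, IsProf A (π P) (π Q) c)
  (hsideTot : ∀ j, j < A.N → j ≠ P → j ≠ Q → π j < π P ∨ π Q < π j)

include hN hπlt hπinj hPQ hπPQ hfun

/-- A non-final vertex cannot be exchanged both with `P` and with `Q`. -/
lemma no_both (j : ℕ) (hj : j < A.N) (hjP : j ≠ P) (hjQ : j ≠ Q)
    (h1 : ∃ τ1, r.ExchangeOf (π j) (π P) τ1) (h2 : ∃ τ2, r.ExchangeOf (π j) (π Q) τ2) :
    False := by
  obtain ⟨τ1, e1⟩ := h1
  obtain ⟨τ2, e2⟩ := h2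
  have hPN : P < A.N := by omega
  have hQN : Q < A.N := by omega
  have heq : τ1 = τ2 := by
    have hPQ2 := hPQ
    rcases hPQ2 with ⟨eP', eQ'⟩ | ⟨eP', eQ'⟩
    · exact hfun.1 j (by omega) τ1 τ2 (Or.inl (eP' ▸ e1)) (Or.inr (eQ' ▸ e2))
    · exact hfun.1 j (by omega) τ1 τ2 (Or.inr (eP' ▸ e1)) (Or.inl (eQ' ▸ e2))
  subst heq
  obtain ⟨ht1, d1⟩ := e1
  obtain ⟨-, d2⟩ := e2
  have hPQne : r.traj (π P) τ1 ≠ r.traj (π Q) τ1 := by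
    intro e
    have := hπinj P Q hPN hQN (traj_inj r τ1 _ _ e)
    omega
  have hjneP : r.traj (π j) τ1 ≠ r.traj (π P) τ1 := by
    intro e; exact hjP (hπinj j P hj hPN (traj_inj r τ1 _ _ e))
  have hjneQ : r.traj (π j) τ1 ≠ r.traj (π Q) τ1 := by
    intro e; exact hjQ (hπinj j Q hj hQN (traj_inj r τ1 _ _ e))
  omega

include hprof0

/-- The grand invariant holds at every time. -/
lemma inv_all : ∀ t, t ≤ r.len → SideInv r π P Q t := by
  have hfunnel := no_both r π P Q hN hπlt hπinj hPQ hπPQ hfun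
  intro t
  induction t with
  | zero =>
    intro _
    obtain ⟨c, hc⟩ := hprof0
    refine ⟨by exact hπPQ, c, ?_, ?_⟩
    · rw [r.src]; exact hc
    · intro j hj hjP hjQ
      exact ⟨fun hg => Or.inl (by exact hg), fun hg => Or.inl (by exact hg)⟩
  | succ t ih =>
    intro ht
    exact inv_step r π P Q hN hπlt hπinj hPQ hπPQ hfun hfunnel t (by omega) (ih (by omega))

/-- A vertex on the lower side is never exchanged with `Q`. -/
lemma L_no_Q (w : ℕ) (hw : w < A.N) (hwP : w ≠ P) (hwQ : w ≠ Q) (hg : π w < π P)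
    (τ : ℕ) (hex : r.ExchangeOf (π w) (π Q) τ) : False := by
  have hfunnel := no_both r π P Q hN hπlt hπinj hPQ hπPQ hfun
  obtain ⟨hord, c, hprof, hsides⟩ :=
    inv_all r π P Q hN hπlt hπinj hPQ hπPQ hfun hprof0 τ (le_of_lt hex.1)
  have hws := (hsides w hw hwP hwQ).1 hg
  obtain ⟨hτ, hcase⟩ := hex
  rcases hcase with ⟨d1, d2⟩ | ⟨d1, d2⟩
  · -- w just below Q
    rcases hws with hbelow | ⟨b1, b2, b3⟩
    · omega
    · -- w is in the band, so it has already crossed P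
      obtain ⟨τ', hτ', g1, g2⟩ := order_flip r (π w) (π P) τ (by omega) (by exact hg) (by omega)
      exact hfunnel w hw hwP hwQ ⟨τ', ⟨by omega, Or.inl ⟨g1, g2⟩⟩⟩ ⟨τ, ⟨hτ, Or.inl ⟨d1, d2⟩⟩⟩
  · -- w just above Q : contradicts the side invariant
    rcases hws with hbelow | ⟨b1, b2, b3⟩ <;> omega

/-- A vertex on the upper side is never exchanged with `P`. -/
lemma U_no_P (w : ℕ) (hw : w < A.N) (hwP : w ≠ P) (hwQ : w ≠ Q) (hg : π Q < π w)
    (τ : ℕ) (hex : r.ExchangeOf (π w) (π P) τ) : False := by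
  have hfunnel := no_both r π P Q hN hπlt hπinj hPQ hπPQ hfun
  obtain ⟨hord, c, hprof, hsides⟩ :=
    inv_all r π P Q hN hπlt hπinj hPQ hπPQ hfun hprof0 τ (le_of_lt hex.1)
  have hws := (hsides w hw hwP hwQ).2 hg
  obtain ⟨hτ, hcase⟩ := hex
  rcases hcase with ⟨d1, d2⟩ | ⟨d1, d2⟩
  · -- w just below P : contradicts the side invariant
    rcases hws with habove | ⟨b1, b2, b3⟩ <;> omega
  · -- w just above P
    rcases hws with habove | ⟨b1, b2, b3⟩
    · omega
    · -- w is in the band, so it has already crossed Q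
      obtain ⟨τ', hτ', g1, g2⟩ := order_flip r (π Q) (π w) τ (by omega) (by exact hg) (by omega)
      exact hfunnel w hw hwP hwQ ⟨τ, ⟨hτ, Or.inr ⟨d1, d2⟩⟩⟩ ⟨τ', ⟨by omega, Or.inr ⟨g1, g2⟩⟩⟩

include hπsurj hsideTot

/-- A lower-side vertex never moves down. -/
lemma noDown (j : ℕ) (hj : j < A.N) (hjP : j ≠ P) (hjQ : j ≠ Q) (hg : π j < π P)
    (t : ℕ) (ht : t < r.len) : r.traj (π j) t ≤ r.traj (π j) (t+1) := by
  by_contra hdown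
  push_neg at hdown
  have hPN : P < A.N := by omega
  have hQN : Q < A.N := by omega
  have ea : r.traj (π j) (t+1) = swapAt (r.steps t) (r.traj (π j) t) := traj_succ r _ t
  have hsN : r.steps t + 1 < A.N := steps_lt r t ht
  have hmove : r.traj (π j) t = r.steps t + 1 ∧ r.traj (π j) (t+1) = r.steps t := by
    rw [ea] at hdown ⊢
    rw [swapAt_def] at hdown ⊢
    split_ifs at hdown ⊢ <;> omega
  obtain ⟨hseq, hadm⟩ : r.seq (t+1) = (r.seq t).rightExchange (r.steps t) ∧
      (r.seq t).H (r.steps t) + (r.seq t).O (r.steps t) ≤ (r.seq t).H (r.steps t + 1) :=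
    ⟨(r.ok t ht).2, (r.ok t ht).1.2⟩
  obtain ⟨x, hx, hxs⟩ : ∃ x, x < A.N ∧ r.traj (π x) t = r.steps t := by
    obtain ⟨h0, hh0, e0⟩ := traj_surj r t (by omega) (r.steps t) (by omega)
    obtain ⟨x, hxN, ex⟩ := hπsurj h0 hh0
    exact ⟨x, hxN, by rw [ex]; exact e0⟩
  obtain ⟨hord, c, hprof, hsides⟩ := inv_all r π P Q hN hπlt hπinj hPQ hπPQ hfun hprof0 t
    (le_of_lt ht)
  obtain ⟨hpq0, ⟨hst1, hst2⟩, ⟨hen1, hen2⟩, hband⟩ := hprof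
  have hjs := (hsides j hj hjP hjQ).1 hg
  by_cases hxP : x = P
  · -- partner is P : arithmetic contradiction with the profile start
    subst hxP
    rw [hxs] at hst1 hst2
    rcases hjs with hbelow | ⟨b1, b2, b3⟩
    · omega
    · rw [hmove.1] at b3; omega
  by_cases hxQ : x = Q
  · -- partner is Q : contradicts the side invariant
    subst hxQ
    rcases hjs with hbelow | ⟨b1, b2, b3⟩ <;> omega
  -- partner is a non-final vertex
  have hexj : r.ExchangeOf (π x) (π j) t := ⟨ht, Or.inl ⟨hxs, hmove.1⟩⟩
  rcases hsideTot x hx hxP hxQ with hxL | hxU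
  · -- both in L : the funnel condition forces one of them to cross Q
    have hcond2 := hfun.2
    have hxN2 : x < A.N - 2 := by omega
    have hjN2 : j < A.N - 2 := by omega
    have hPQ2 := hPQ
    rcases hPQ2 with ⟨eP', eQ'⟩ | ⟨eP', eQ'⟩
    · rcases hcond2 x j t hxN2 hjN2 hexj with ⟨-, t2, e2⟩ | ⟨⟨t1, e1⟩, -⟩
      · exact L_no_Q r π P Q hN hπlt hπinj hPQ hπPQ hfun hprof0 j hj hjP hjQ hg t2 (eQ' ▸ e2)
      · exact L_no_Q r π P Q hN hπlt hπinj hPQ hπPQ hfun hprof0 x hx hxP hxQ hxL t1 (eQ' ▸ e1)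
    · rcases hcond2 x j t hxN2 hjN2 hexj with ⟨⟨t1, e1⟩, -⟩ | ⟨-, t2, e2⟩
      · exact L_no_Q r π P Q hN hπlt hπinj hPQ hπPQ hfun hprof0 x hx hxP hxQ hxL t1 (eQ' ▸ e1)
      · exact L_no_Q r π P Q hN hπlt hπinj hPQ hπPQ hfun hprof0 j hj hjP hjQ hg t2 (eQ' ▸ e2)
  · -- x in U : geometric (left-right) contradiction
    have hxs' := (hsides x hx hxP hxQ).2 hxU
    rw [hxs] at hxs'
    rcases hjs with hbelow | ⟨b1, b2, b3⟩
    · rcases hxs' with h' | ⟨c1, c2, c3⟩ <;> omega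
    · rw [hmove.1] at b3
      rcases hxs' with h' | ⟨c1, c2, c3⟩
      · omega
      · have hbm := hband (r.steps t) (by omega) (by omega)
        omega

/-- An upper-side vertex never moves up. -/
lemma noUp (j : ℕ) (hj : j < A.N) (hjP : j ≠ P) (hjQ : j ≠ Q) (hg : π Q < π j)
    (t : ℕ) (ht : t < r.len) : r.traj (π j) (t+1) ≤ r.traj (π j) t := by
  by_contra hup
  push_neg at hup
  have hPN : P < A.N := by omega
  have hQN : Q < A.N := by omega
  have ea : r.traj (π j) (t+1) = swapAt (r.steps t) (r.traj (π j) t) := traj_succ r _ t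
  have hsN : r.steps t + 1 < A.N := steps_lt r t ht
  have hmove : r.traj (π j) t = r.steps t ∧ r.traj (π j) (t+1) = r.steps t + 1 := by
    rw [ea] at hup ⊢
    rw [swapAt_def] at hup ⊢
    split_ifs at hup ⊢ <;> omega
  obtain ⟨hseq, hadm⟩ : r.seq (t+1) = (r.seq t).rightExchange (r.steps t) ∧
      (r.seq t).H (r.steps t) + (r.seq t).O (r.steps t) ≤ (r.seq t).H (r.steps t + 1) :=
    ⟨(r.ok t ht).2, (r.ok t ht).1.2⟩
  obtain ⟨y, hy, hys⟩ : ∃ y, y < A.N ∧ r.traj (π y) t = r.steps t + 1 := by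
    obtain ⟨h0, hh0, e0⟩ := traj_surj r t (by omega) (r.steps t + 1) (by omega)
    obtain ⟨y, hyN, ey⟩ := hπsurj h0 hh0
    exact ⟨y, hyN, by rw [ey]; exact e0⟩
  obtain ⟨hord, c, hprof, hsides⟩ := inv_all r π P Q hN hπlt hπinj hPQ hπPQ hfun hprof0 t
    (le_of_lt ht)
  obtain ⟨hpq0, ⟨hst1, hst2⟩, ⟨hen1, hen2⟩, hband⟩ := hprof
  have hjs := (hsides j hj hjP hjQ).2 hg
  by_cases hyP : y = P
  · subst hyP
    rcases hjs with habove | ⟨b1, b2, b3⟩ <;> omega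
  by_cases hyQ : y = Q
  · -- partner is Q : arithmetic contradiction with the profile end
    subst hyQ
    rw [hys] at hen1 hen2
    rcases hjs with habove | ⟨b1, b2, b3⟩
    · omega
    · rw [hmove.1] at b3
      have hbm := hband (r.steps t) (by omega) (by omega)
      omega
  have hexj : r.ExchangeOf (π j) (π y) t := ⟨ht, Or.inl ⟨hmove.1, hys⟩⟩
  rcases hsideTot y hy hyP hyQ with hyL | hyU
  · -- y in L : geometric (left-right) contradiction
    have hys' := (hsides y hy hyP hyQ).1 hyL
    rw [hys] at hys'
    rcases hjs with habove | ⟨b1, b2, b3⟩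
    · rcases hys' with h' | ⟨c1, c2, c3⟩ <;> omega
    · rw [hmove.1] at b3
      rcases hys' with h' | ⟨c1, c2, c3⟩
      · omega
      · have hbm := hband (r.steps t) (by omega) (by omega)
        omega
  · -- both in U : the funnel condition forces one of them to cross P
    have hcond2 := hfun.2
    have hyN2 : y < A.N - 2 := by omega
    have hjN2 : j < A.N - 2 := by omega
    have hPQ2 := hPQ
    rcases hPQ2 with ⟨eP', eQ'⟩ | ⟨eP', eQ'⟩
    · rcases hcond2 j y t hjN2 hyN2 hexj with ⟨⟨t1, e1⟩, -⟩ | ⟨-, t2, e2⟩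
      · exact U_no_P r π P Q hN hπlt hπinj hPQ hπPQ hfun hprof0 j hj hjP hjQ hg t1 (eP' ▸ e1)
      · exact U_no_P r π P Q hN hπlt hπinj hPQ hπPQ hfun hprof0 y hy hyP hyQ hyU t2 (eP' ▸ e2)
    · rcases hcond2 j y t hjN2 hyN2 hexj with ⟨-, t2, e2⟩ | ⟨⟨t1, e1⟩, -⟩
      · exact U_no_P r π P Q hN hπlt hπinj hPQ hπPQ hfun hprof0 y hy hyP hyQ hyU t2 (eP' ▸ e2)
      · exact U_no_P r π P Q hN hπlt hπinj hPQ hπPQ hfun hprof0 j hj hjP hjQ hg t1 (eP' ▸ e1)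

/-- Monotonicity of the trajectory of every non-final vertex. -/
theorem main_mono (i : ℕ) (hi : i < A.N) (hiP : i ≠ P) (hiQ : i ≠ Q) :
    (∀ t t', t ≤ t' → t' ≤ r.len → r.traj (π i) t ≤ r.traj (π i) t') ∨
    (∀ t t', t ≤ t' → t' ≤ r.len → r.traj (π i) t' ≤ r.traj (π i) t) := by
  rcases hsideTot i hi hiP hiQ with hL | hU
  · left
    have key : ∀ d t, t + d ≤ r.len → r.traj (π i) t ≤ r.traj (π i) (t + d) := by
      intro d
      induction d with
      | zero => intro t _; exact le_refl _
      | succ d ihd =>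
        intro t hd
        have h1 := noDown r π P Q hN hπlt hπinj hπsurj hPQ hπPQ hfun hprof0 hsideTot
          i hi hiP hiQ hL t (by omega)
        have h2 := ihd (t+1) (by omega)
        calc r.traj (π i) t ≤ r.traj (π i) (t + 1) := h1
        _ ≤ r.traj (π i) (t + 1 + d) := h2
        _ = r.traj (π i) (t + (d+1)) := by ring_nf
    intro t t' htt' ht'
    have := key (t' - t) t (by omega)
    have e : t + (t' - t) = t' := by omega
    rwa [e] at this
  · right
    have key : ∀ d t, t + d ≤ r.len → r.traj (π i) (t + d) ≤ r.traj (π i) t := by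
      intro d
      induction d with
      | zero => intro t _; exact le_refl _
      | succ d ihd =>
        intro t hd
        have h1 := noUp r π P Q hN hπlt hπinj hπsurj hPQ hπPQ hfun hprof0 hsideTot
          i hi hiP hiQ hU t (by omega)
        have h2 := ihd (t+1) (by omega)
        calc r.traj (π i) (t + (d+1)) = r.traj (π i) (t + 1 + d) := by ring_nf
        _ ≤ r.traj (π i) (t + 1) := h2
        _ ≤ r.traj (π i) t := h1
    intro t t' htt' ht'
    have := key (t' - t) t (by omega)
    have e : t + (t' - t) = t' := by omega
    rwa [e] at this

end Main2

end FTM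
namespace FTM

/-! ### The vertical flip of a diagram -/

/-- Turning a diagram upside down (inputs and outputs swap roles). -/
def flipD (D : Diagram) : Diagram where
  S := D.S
  N := D.N
  H := fun k => if k < D.N then D.H (D.N - 1 - k) else 0
  I := fun k => if k < D.N then D.O (D.N - 1 - k) else 0
  O := fun k => if k < D.N then D.I (D.N - 1 - k) else 0

lemma flipD_N (D : Diagram) : (flipD D).N = D.N := rfl

lemma flipD_H (D : Diagram) {k : ℕ} (hk : k < D.N) : (flipD D).H k = D.H (D.N - 1 - k) := by
  simp [flipD, hk]

lemma flipD_I (D : Diagram) {k : ℕ} (hk : k < D.N) : (flipD D).I k = D.O (D.N - 1 - k) := by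
  simp [flipD, hk]

lemma flipD_O (D : Diagram) {k : ℕ} (hk : k < D.N) : (flipD D).O k = D.I (D.N - 1 - k) := by
  simp [flipD, hk]

lemma diagram_ext {D E : Diagram} (hS : D.S = E.S) (hN : D.N = E.N) (hH : D.H = E.H)
    (hI : D.I = E.I) (hO : D.O = E.O) : D = E := by
  cases D; cases E; simp_all

/-- The flip of a right exchange is again a right exchange. -/
lemma flip_rex {D : Diagram} {n : ℕ} (hadm : D.AdmitsRight n) :
    (flipD (D.rightExchange n)).AdmitsRight (D.N - 2 - n) ∧
    (flipD (D.rightExchange n)).rightExchange (D.N - 2 - n) = flipD D := by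
  obtain ⟨hn, hH⟩ := hadm
  have e1 : D.N - 1 - (D.N - 2 - n) = n + 1 := by omega
  have e2 : D.N - 1 - (D.N - 2 - n + 1) = n := by omega
  have hflipH1 : (flipD (D.rightExchange n)).H (D.N - 2 - n) = D.H n := by
    rw [flipD_H _ (by rw [rexN]; omega)]
    rw [rexN, e1, rexH_at1]
  have hflipH2 : (flipD (D.rightExchange n)).H (D.N - 2 - n + 1) =
      D.H (n+1) + D.I n - D.O n := by
    rw [flipD_H _ (by rw [rexN]; omega)]
    rw [rexN, e2, rexH_at]
  have hflipI1 : (flipD (D.rightExchange n)).I (D.N - 2 - n) = D.O n := by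
    rw [flipD_I _ (by rw [rexN]; omega)]
    rw [rexN, e1, rexO_at1]
  have hflipI2 : (flipD (D.rightExchange n)).I (D.N - 2 - n + 1) = D.O (n+1) := by
    rw [flipD_I _ (by rw [rexN]; omega)]
    rw [rexN, e2, rexO_at]
  have hflipO1 : (flipD (D.rightExchange n)).O (D.N - 2 - n) = D.I n := by
    rw [flipD_O _ (by rw [rexN]; omega)]
    rw [rexN, e1, rexI_at1]
  have hflipO2 : (flipD (D.rightExchange n)).O (D.N - 2 - n + 1) = D.I (n+1) := by
    rw [flipD_O _ (by rw [rexN]; omega)]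
    rw [rexN, e2, rexI_at]
  constructor
  · refine ⟨?_, ?_⟩
    · show D.N - 2 - n + 1 < D.N
      omega
    · rw [hflipH1, hflipO1, hflipH2]
      omega
  · refine diagram_ext rfl rfl ?_ ?_ ?_
    · funext k
      rcases (by omega : k = D.N - 2 - n ∨ k = D.N - 2 - n + 1 ∨
          (k ≠ D.N - 2 - n ∧ k ≠ D.N - 2 - n + 1)) with hk | hk | ⟨hk1, hk2⟩
      · subst hk
        rw [rexH_at, hflipH2, hflipI1, hflipO1, flipD_H D (by omega : D.N - 2 - n < D.N), e1]
        omega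
      · subst hk
        rw [rexH_at1, hflipH1, flipD_H D (by omega : D.N - 2 - n + 1 < D.N), e2]
      · rw [rexH_ne _ hk1 hk2]
        by_cases hk : k < D.N
        · rw [flipD_H (D.rightExchange n) (show k < (D.rightExchange n).N from hk),
            flipD_H D hk, rexN, rexH_ne _ (by omega) (by omega)]
        · have hk' : ¬ k < (D.rightExchange n).N := hk
          simp [flipD, hk, hk']
    · funext k
      rcases (by omega : k = D.N - 2 - n ∨ k = D.N - 2 - n + 1 ∨
          (k ≠ D.N - 2 - n ∧ k ≠ D.N - 2 - n + 1)) with hk | hk | ⟨hk1, hk2⟩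
      · subst hk
        rw [rexI_at, hflipI2, flipD_I D (by omega : D.N - 2 - n < D.N), e1]
      · subst hk
        rw [rexI_at1, hflipI1, flipD_I D (by omega : D.N - 2 - n + 1 < D.N), e2]
      · rw [rexI_ne _ hk1 hk2]
        by_cases hk : k < D.N
        · rw [flipD_I (D.rightExchange n) (show k < (D.rightExchange n).N from hk),
            flipD_I D hk, rexN, rexO_ne _ (by omega) (by omega)]
        · have hk' : ¬ k < (D.rightExchange n).N := hk
          simp [flipD, hk, hk']
    · funext k
      rcases (by omega : k = D.N - 2 - n ∨ k = D.N - 2 - n + 1 ∨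
          (k ≠ D.N - 2 - n ∧ k ≠ D.N - 2 - n + 1)) with hk | hk | ⟨hk1, hk2⟩
      · subst hk
        rw [rexO_at, hflipO2, flipD_O D (by omega : D.N - 2 - n < D.N), e1]
      · subst hk
        rw [rexO_at1, hflipO1, flipD_O D (by omega : D.N - 2 - n + 1 < D.N), e2]
      · rw [rexO_ne _ hk1 hk2]
        by_cases hk : k < D.N
        · rw [flipD_O (D.rightExchange n) (show k < (D.rightExchange n).N from hk),
            flipD_O D hk, rexN, rexI_ne _ (by omega) (by omega)]
        · have hk' : ¬ k < (D.rightExchange n).N := hk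
          simp [flipD, hk, hk']

/-- The flip of a wire profile. -/
lemma flip_prof {D : Diagram} {p q : ℕ} {c : ℕ → ℕ} (hq : q < D.N) (hc : IsProf D p q c) :
    IsProf (flipD D) (D.N - 1 - q) (D.N - 1 - p) (fun l => c (D.N - l)) := by
  obtain ⟨hpq, ⟨ha1, ha2⟩, ⟨hb1, hb2⟩, hband⟩ := hc
  refine ⟨by omega, ?_, ?_, ?_⟩
  · have e1 : D.N - (D.N - 1 - q + 1) = q := by omega
    rw [flipD_H _ (by omega : D.N - 1 - q < D.N), flipD_O _ (by omega : D.N - 1 - q < D.N)]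
    have e2 : D.N - 1 - (D.N - 1 - q) = q := by omega
    rw [e2]
    simp only [e1]
    exact ⟨hb1, hb2⟩
  · have e1 : D.N - (D.N - 1 - p) = p + 1 := by omega
    rw [flipD_H _ (by omega : D.N - 1 - p < D.N), flipD_I _ (by omega : D.N - 1 - p < D.N)]
    have e2 : D.N - 1 - (D.N - 1 - p) = p := by omega
    rw [e2]
    simp only [e1]
    exact ⟨ha1, ha2⟩
  · intro m hm1 hm2
    have hmN : m < D.N := by omega
    have e2 : D.N - 1 - m + 1 = D.N - m := by omega
    have e3 : D.N - (m + 1) = D.N - 1 - m := by omega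
    rw [flipD_H _ hmN, flipD_I _ hmN, flipD_O _ hmN]
    simp only [e3]
    have hbm := hband (D.N - 1 - m) (by omega) (by omega)
    rw [e2] at hbm
    omega

section FlipRed

variable {A B : Diagram} (r : Reduction A B)

/-- The time-reversed, vertically flipped reduction. -/
def flipRed : Reduction (flipD (r.seq r.len)) (flipD A) where
  len := r.len
  seq := fun t => flipD (r.seq (r.len - t))
  steps := fun t => A.N - 2 - r.steps (r.len - 1 - t)
  src := by simp
  tgt := by simp [r.src]
  ok := by
    intro i hi
    have hτ : r.len - 1 - i < r.len := by omega
    obtain ⟨hadm, hseq⟩ := r.ok (r.len - 1 - i) hτ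
    have hNτ : (r.seq (r.len - 1 - i)).N = A.N := seq_N r _ (by omega)
    have e1 : r.len - i = (r.len - 1 - i) + 1 := by omega
    have e2 : r.len - (i + 1) = r.len - 1 - i := by omega
    have hkey := flip_rex hadm
    rw [← hseq, hNτ] at hkey
    constructor
    · show (flipD (r.seq (r.len - i))).AdmitsRight _
      rw [e1]
      exact hkey.1
    · show flipD (r.seq (r.len - (i+1))) = (flipD (r.seq (r.len - i))).rightExchange _
      rw [e1, e2]
      exact hkey.2.symm

lemma flipRed_len : (flipRed r).len = r.len := rfl

lemma flipRed_steps (t : ℕ) : (flipRed r).steps t = A.N - 2 - r.steps (r.len - 1 - t) := rfl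

/-- Trajectory correspondence for the flipped reduction. -/
lemma flip_traj (hN : 2 ≤ A.N) : ∀ t, t ≤ r.len → ∀ h, h < A.N →
    (flipRed r).traj (A.N - 1 - r.traj h r.len) t = A.N - 1 - r.traj h (r.len - t) := by
  intro t
  induction t with
  | zero => intro _ h _; simp [Reduction.traj]
  | succ t ih =>
    intro ht h hh
    have hτ : r.len - 1 - t < r.len := by omega
    have e1 : r.len - t = (r.len - 1 - t) + 1 := by omega
    have e2 : r.len - (t + 1) = r.len - 1 - t := by omega
    have hsN : r.steps (r.len - 1 - t) + 1 < A.N := steps_lt r _ hτ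
    have ha : r.traj h (r.len - 1 - t) < A.N := traj_lt r _ (by omega) h hh
    have key : (flipRed r).traj (A.N - 1 - r.traj h r.len) (t+1) =
        swapAt ((flipRed r).steps t) ((flipRed r).traj (A.N - 1 - r.traj h r.len) t) :=
      traj_succ _ _ t
    rw [key, ih (by omega) h hh, flipRed_steps, e1, e2]
    have etr : r.traj h (r.len - 1 - t + 1) =
        swapAt (r.steps (r.len - 1 - t)) (r.traj h (r.len - 1 - t)) := traj_succ _ _ _
    rw [etr]
    generalize hs : r.steps (r.len - 1 - t) = s at *
    generalize haa : r.traj h (r.len - 1 - t) = a at *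
    simp only [swapAt_def]
    split_ifs <;> omega

end FlipRed

end FTM
namespace FTM

/-! ### Extracting the initial wire profile from linearity -/

lemma chain_level {D : Diagram} : ∀ {p q : ℕ × ℕ}, Relation.ReflTransGen (Persist D) p q →
    p.1 ≤ q.1 := by
  intro p q h
  induction h with
  | refl => exact le_refl _
  | tail h1 h2 ih =>
    have := h2.2.1
    omega

lemma wire_of_chain {D : Diagram} {v : ℕ} {q : ℕ × ℕ} (hin : IsInput D v q) :
    ∀ p : ℕ × ℕ, Relation.ReflTransGen (Persist D) p q →
    ∃ c : ℕ → ℕ, c p.1 = p.2 ∧ (D.H v ≤ c v ∧ c v < D.H v + D.I v) ∧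
      ∀ m, p.1 ≤ m → m < v → ((c m < D.H m ∧ c (m+1) = c m) ∨
        (D.H m + D.I m ≤ c m ∧ c (m+1) + D.I m = c m + D.O m)) := by
  obtain ⟨hvN, hq1, hq2, hq3⟩ := hin
  intro p hchain
  induction hchain using Relation.ReflTransGen.head_induction_on with
  | refl =>
    refine ⟨fun _ => q.2, by rw [hq1], ⟨hq2, hq3⟩, ?_⟩
    intro m hm1 hm2
    rw [hq1] at hm1
    omega
  | head h1 h2 ih =>
    rename_i a b
    obtain ⟨c, hc1, hc2, hc3⟩ := ih
    obtain ⟨haN, hb1, hW, hcase⟩ := h1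
    have hlev : b.1 ≤ q.1 := chain_level h2
    have hbv : b.1 ≤ v := by omega
    have hav : a.1 < v := by omega
    refine ⟨Function.update c a.1 a.2, Function.update_self _ _ _, ?_, ?_⟩
    · rw [Function.update_of_ne (by omega : v ≠ a.1)]
      exact hc2
    · intro m hm1 hm2
      rcases (by omega : a.1 = m ∨ a.1 + 1 ≤ m) with hm | hm
      · subst hm
        have u1 : Function.update c a.1 a.2 a.1 = a.2 := Function.update_self _ _ _
        have u2 : Function.update c a.1 a.2 (a.1+1) = c (a.1+1) :=
          Function.update_of_ne (by omega) _ _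
        have hcb : c b.1 = b.2 := hc1
        rw [hb1] at hcb
        rcases hcase with ⟨x1, x2⟩ | ⟨x1, x2⟩
        · left; constructor <;> omega
        · right
          have x2' : b.2 + D.I a.1 = a.2 + D.O a.1 := by
            simp only [Diagram.Δ] at x2
            omega
          constructor <;> omega
      · have u1 : Function.update c a.1 a.2 m = c m := Function.update_of_ne (by omega) _ _
        have u2 : Function.update c a.1 a.2 (m+1) = c (m+1) :=
          Function.update_of_ne (by omega) _ _
        have := hc3 m (by omega) hm2
        omega

lemma prof_of_edge {D : Diagram} {u v : ℕ} (h : EdgeFromTo D u v) :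
    u < v ∧ ∃ c, IsProf D u v c := by
  obtain ⟨p, q, hout, hchain, hin⟩ := h
  obtain ⟨huN, hp1, hp2, hp3⟩ := hout
  obtain ⟨c, hc1, hc2, hc3⟩ := wire_of_chain hin p hchain
  have hlev := chain_level hchain
  have hqv : q.1 = v := hin.2.1
  have huv : u < v := by omega
  have hstart : c (u+1) = p.2 := by rw [← hp1]; exact hc1
  refine ⟨huv, c, huv, ⟨by omega, by omega⟩, hc2, ?_⟩
  intro m hm1 hm2
  exact hc3 m (by omega) hm2

/-! ### Exchange correspondence for the flipped reduction -/

section FlipEx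

variable {A B : Diagram} (r : Reduction A B) (hN : 2 ≤ A.N)

include hN

lemma flip_exchange_fwd (a b : ℕ) (ha : a < A.N) (hb : b < A.N) (t : ℕ)
    (hex : (flipRed r).ExchangeOf (A.N - 1 - r.traj a r.len) (A.N - 1 - r.traj b r.len) t) :
    t < r.len ∧ r.ExchangeOf a b (r.len - 1 - t) := by
  obtain ⟨ht, hd⟩ := hex
  have ht' : t < r.len := ht
  refine ⟨ht', ?_⟩
  have hτ : r.len - 1 - t < r.len := by omega
  have e1 : r.len - t = (r.len - 1 - t) + 1 := by omega
  have E1 := flip_traj r hN t (by omega) a ha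
  have E2 := flip_traj r hN t (by omega) b hb
  have hsN : r.steps (r.len - 1 - t) + 1 < A.N := steps_lt r _ hτ
  have hxa : r.traj a (r.len - 1 - t) < A.N := traj_lt r _ (by omega) a ha
  have hxb : r.traj b (r.len - 1 - t) < A.N := traj_lt r _ (by omega) b hb
  have eta : r.traj a (r.len - 1 - t + 1) =
      swapAt (r.steps (r.len - 1 - t)) (r.traj a (r.len - 1 - t)) := traj_succ _ _ _
  have etb : r.traj b (r.len - 1 - t + 1) =
      swapAt (r.steps (r.len - 1 - t)) (r.traj b (r.len - 1 - t)) := traj_succ _ _ _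
  have hst : (flipRed r).steps t = A.N - 2 - r.steps (r.len - 1 - t) := rfl
  rw [E1, E2, hst, e1, eta, etb] at hd
  refine ⟨hτ, ?_⟩
  simp only [swapAt_def] at hd ⊢
  split_ifs at hd <;> omega

lemma flip_exchange_bwd (a b : ℕ) (ha : a < A.N) (hb : b < A.N) (τ : ℕ)
    (hex : r.ExchangeOf a b τ) :
    (flipRed r).ExchangeOf (A.N - 1 - r.traj a r.len) (A.N - 1 - r.traj b r.len)
      (r.len - 1 - τ) := by
  obtain ⟨hτ, hd⟩ := hex
  set t := r.len - 1 - τ with htdef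
  have ht : t < r.len := by omega
  have e0 : r.len - 1 - t = τ := by omega
  have e1 : r.len - t = τ + 1 := by omega
  have E1 := flip_traj r hN t (by omega) a ha
  have E2 := flip_traj r hN t (by omega) b hb
  have hsN : r.steps τ + 1 < A.N := steps_lt r _ hτ
  have hxa : r.traj a τ < A.N := traj_lt r _ (by omega) a ha
  have hxb : r.traj b τ < A.N := traj_lt r _ (by omega) b hb
  have eta : r.traj a (τ + 1) = swapAt (r.steps τ) (r.traj a τ) := traj_succ _ _ _
  have etb : r.traj b (τ + 1) = swapAt (r.steps τ) (r.traj b τ) := traj_succ _ _ _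
  have hst : (flipRed r).steps t = A.N - 2 - r.steps (r.len - 1 - t) := rfl
  refine ⟨ht, ?_⟩
  rw [E1, E2, hst, e0, e1, eta, etb]
  simp only [swapAt_def]
  split_ifs <;> omega

end FlipEx

end FTM
namespace FTM

/-- The unified main theorem, in terms of an edge-profile between the finals. -/
theorem final_main {A B : Diagram} (r : Reduction A B) (π : ℕ → ℕ) (P Q : ℕ)
    (hN2 : 2 ≤ A.N)
    (hπlt : ∀ i, i < A.N → π i < A.N)
    (hπinj : ∀ i j, i < A.N → j < A.N → π i = π j → i = j)
    (hπsurj : ∀ h, h < A.N → ∃ i, i < A.N ∧ π i = h)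
    (hPQ : (P = A.N - 2 ∧ Q = A.N - 1) ∨ (P = A.N - 1 ∧ Q = A.N - 2))
    (hπPQ : π P < π Q)
    (hprof0 : ∃ c, IsProf A (π P) (π Q) c)
    (hfun : r.IsFunnel π)
    (hcol : r.CollapsibleAt π 0 ∨ r.CollapsibleAt π r.len) :
    ∀ i, i < A.N - 2 →
      (∀ t t', t ≤ t' → t' ≤ r.len → r.traj (π i) t ≤ r.traj (π i) t') ∨
      (∀ t t', t ≤ t' → t' ≤ r.len → r.traj (π i) t' ≤ r.traj (π i) t) := by
  rcases hcol with hcol0 | hcolLen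
  · -- collapsible at the start : apply the main monotonicity theorem directly
    have hsideTot : ∀ j, j < A.N → j ≠ P → j ≠ Q → π j < π P ∨ π Q < π j := by
      intro j hj hjP hjQ
      by_contra hcon
      push_neg at hcon
      obtain ⟨g1, g2⟩ := hcon
      have h1 : min (r.traj (π (A.N-2)) 0) (r.traj (π (A.N-1)) 0) ≤ r.traj (π j) 0 := by
        show min (π (A.N-2)) (π (A.N-1)) ≤ π j
        rcases hPQ with ⟨e1, e2⟩ | ⟨e1, e2⟩ <;> rw [← e1, ← e2] <;> omega
      have h2 : r.traj (π j) 0 ≤ max (r.traj (π (A.N-2)) 0) (r.traj (π (A.N-1)) 0) := by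
        show π j ≤ max (π (A.N-2)) (π (A.N-1))
        rcases hPQ with ⟨e1, e2⟩ | ⟨e1, e2⟩ <;> rw [← e1, ← e2] <;> omega
      have := hcol0 j hj h1 h2
      rcases hPQ with ⟨e1, e2⟩ | ⟨e1, e2⟩ <;> omega
    intro i hi
    exact main_mono r π P Q hN2 hπlt hπinj hπsurj hPQ hπPQ hfun hprof0 hsideTot i
      (by omega) (by omega) (by omega)
  · -- collapsible at the end : flip the reduction
    have prof_all : ∀ t, t ≤ r.len →
        ∃ c, IsProf (r.seq t) (r.traj (π P) t) (r.traj (π Q) t) c := by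
      intro t
      induction t with
      | zero =>
        intro _
        obtain ⟨c, hc⟩ := hprof0
        exact ⟨c, by rw [r.src]; exact hc⟩
      | succ t ih =>
        intro ht
        obtain ⟨c, hc⟩ := ih (by omega)
        obtain ⟨hadm, hseq⟩ := r.ok t (by omega)
        obtain ⟨c', hc', -⟩ := prof_step hadm hc
        refine ⟨c', ?_⟩
        have eP : r.traj (π P) (t+1) = swapAt (r.steps t) (r.traj (π P) t) := traj_succ _ _ _
        have eQ : r.traj (π Q) (t+1) = swapAt (r.steps t) (r.traj (π Q) t) := traj_succ _ _ _
        rw [hseq, eP, eQ]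
        exact hc'
    obtain ⟨cl, hcl⟩ := prof_all r.len (le_refl _)
    have hordl : r.traj (π P) r.len < r.traj (π Q) r.len := hcl.1
    have hPN : P < A.N := by omega
    have hQN : Q < A.N := by omega
    have hPl : r.traj (π P) r.len < A.N := traj_lt r _ (le_refl _) _ (hπlt P hPN)
    have hQl : r.traj (π Q) r.len < A.N := traj_lt r _ (le_refl _) _ (hπlt Q hQN)
    have heN : (flipD (r.seq r.len)).N = A.N := seq_N r r.len (le_refl _)
    have heN2 : (flipD (r.seq r.len)).N - 2 = A.N - 2 := by rw [heN]
    have heN1 : (flipD (r.seq r.len)).N - 1 = A.N - 1 := by rw [heN]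
    set π' : ℕ → ℕ := fun i => A.N - 1 - r.traj (π i) r.len with hπ'
    have hN' : 2 ≤ (flipD (r.seq r.len)).N := by rw [heN]; exact hN2
    have hπ'lt : ∀ i, i < (flipD (r.seq r.len)).N → π' i < (flipD (r.seq r.len)).N := by
      intro i hi
      rw [heN] at hi ⊢
      simp only [hπ']
      omega
    have hπ'inj : ∀ i j, i < (flipD (r.seq r.len)).N → j < (flipD (r.seq r.len)).N →
        π' i = π' j → i = j := by
      intro i j hi hj e
      rw [heN] at hi hj
      simp only [hπ'] at e
      have h1 : r.traj (π i) r.len < A.N := traj_lt r _ (le_refl _) _ (hπlt i hi)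
      have h2 : r.traj (π j) r.len < A.N := traj_lt r _ (le_refl _) _ (hπlt j hj)
      have : r.traj (π i) r.len = r.traj (π j) r.len := by omega
      exact hπinj i j hi hj (traj_inj r _ _ _ this)
    have hπ'surj : ∀ h, h < (flipD (r.seq r.len)).N →
        ∃ i, i < (flipD (r.seq r.len)).N ∧ π' i = h := by
      intro h hh
      rw [heN] at hh
      obtain ⟨h0, hh0, e0⟩ := traj_surj r r.len (le_refl _) (A.N - 1 - h) (by omega)
      obtain ⟨i, hi, ei⟩ := hπsurj h0 hh0
      refine ⟨i, by rw [heN]; exact hi, ?_⟩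
      simp only [hπ', ei, e0]
      omega
    have hPQ' : (Q = (flipD (r.seq r.len)).N - 2 ∧ P = (flipD (r.seq r.len)).N - 1) ∨
        (Q = (flipD (r.seq r.len)).N - 1 ∧ P = (flipD (r.seq r.len)).N - 2) := by
      rw [heN2, heN1]
      rcases hPQ with ⟨e1, e2⟩ | ⟨e1, e2⟩
      · exact Or.inr ⟨e2, e1⟩
      · exact Or.inl ⟨e2, e1⟩
    have hπ'PQ : π' Q < π' P := by
      simp only [hπ']
      omega
    have hprof0' : ∃ c, IsProf (flipD (r.seq r.len)) (π' Q) (π' P) c := by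
      have eNl : (r.seq r.len).N = A.N := seq_N r r.len (le_refl _)
      have hF := flip_prof (by rw [eNl]; exact hQl) hcl
      rw [eNl] at hF
      exact ⟨_, hF⟩
    -- funnel transfer
    have hfwd : ∀ a b t, a < A.N → b < A.N →
        (flipRed r).ExchangeOf (π' a) (π' b) t →
        t < r.len ∧ r.ExchangeOf (π a) (π b) (r.len - 1 - t) := by
      intro a b t ha hb he
      exact flip_exchange_fwd r hN2 (π a) (π b) (hπlt a ha) (hπlt b hb) t he
    have hbwd : ∀ a b τ, a < A.N → b < A.N → r.ExchangeOf (π a) (π b) τ →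
        (flipRed r).ExchangeOf (π' a) (π' b) (r.len - 1 - τ) := by
      intro a b τ ha hb he
      exact flip_exchange_bwd r hN2 (π a) (π b) (hπlt a ha) (hπlt b hb) τ he
    have hfun' : (flipRed r).IsFunnel π' := by
      constructor
      · intro i hi t t' e e'
        rw [heN2] at hi
        rw [heN2, heN1] at e e'
        have hF1 : A.N - 2 < A.N := by omega
        have hF2 : A.N - 1 < A.N := by omega
        have d : t < r.len ∧ (r.ExchangeOf (π i) (π (A.N-2)) (r.len - 1 - t) ∨
            r.ExchangeOf (π i) (π (A.N-1)) (r.len - 1 - t)) := by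
          rcases e with e | e
          · have := hfwd i (A.N-2) t (by omega) hF1 e
            exact ⟨this.1, Or.inl this.2⟩
          · have := hfwd i (A.N-1) t (by omega) hF2 e
            exact ⟨this.1, Or.inr this.2⟩
        have d' : t' < r.len ∧ (r.ExchangeOf (π i) (π (A.N-2)) (r.len - 1 - t') ∨
            r.ExchangeOf (π i) (π (A.N-1)) (r.len - 1 - t')) := by
          rcases e' with e' | e'
          · have := hfwd i (A.N-2) t' (by omega) hF1 e'
            exact ⟨this.1, Or.inl this.2⟩
          · have := hfwd i (A.N-1) t' (by omega) hF2 e'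
            exact ⟨this.1, Or.inr this.2⟩
        have := hfun.1 i hi (r.len - 1 - t) (r.len - 1 - t') d.2 d'.2
        omega
      · intro i j t hi hj he
        rw [heN2] at hi hj
        have hF1 : A.N - 2 < A.N := by omega
        have hF2 : A.N - 1 < A.N := by omega
        have d := hfwd i j t (by omega) (by omega) he
        have key := hfun.2 i j (r.len - 1 - t) hi hj d.2
        rw [heN2, heN1]
        rcases key with ⟨⟨t1, k1⟩, ⟨t2, k2⟩⟩ | ⟨⟨t1, k1⟩, ⟨t2, k2⟩⟩
        · exact Or.inl ⟨⟨r.len - 1 - t1, hbwd i (A.N-2) t1 (by omega) hF1 k1⟩,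
            ⟨r.len - 1 - t2, hbwd j (A.N-1) t2 (by omega) hF2 k2⟩⟩
        · exact Or.inr ⟨⟨r.len - 1 - t1, hbwd i (A.N-1) t1 (by omega) hF2 k1⟩,
            ⟨r.len - 1 - t2, hbwd j (A.N-2) t2 (by omega) hF1 k2⟩⟩
    have hsideTot' : ∀ j, j < (flipD (r.seq r.len)).N → j ≠ Q → j ≠ P →
        π' j < π' Q ∨ π' P < π' j := by
      intro j hj hjQ hjP
      rw [heN] at hj
      have hjl : r.traj (π j) r.len < A.N := traj_lt r _ (le_refl _) _ (hπlt j hj)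
      by_contra hcon
      push_neg at hcon
      obtain ⟨g1, g2⟩ := hcon
      simp only [hπ'] at g1 g2
      have h1 : min (r.traj (π (A.N-2)) r.len) (r.traj (π (A.N-1)) r.len) ≤
          r.traj (π j) r.len := by
        rcases hPQ with ⟨e1, e2⟩ | ⟨e1, e2⟩ <;> rw [← e1, ← e2] <;> omega
      have h2 : r.traj (π j) r.len ≤
          max (r.traj (π (A.N-2)) r.len) (r.traj (π (A.N-1)) r.len) := by
        rcases hPQ with ⟨e1, e2⟩ | ⟨e1, e2⟩ <;> rw [← e1, ← e2] <;> omega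
      have := hcolLen j hj h1 h2
      rcases hPQ with ⟨e1, e2⟩ | ⟨e1, e2⟩ <;> omega
    intro i hi
    have hmono' := main_mono (flipRed r) π' Q P hN' hπ'lt hπ'inj hπ'surj hPQ' hπ'PQ hfun'
      hprof0' hsideTot' i (by rw [heN]; omega) (by omega) (by omega)
    have htr : ∀ t, t ≤ r.len →
        (flipRed r).traj (π' i) t = A.N - 1 - r.traj (π i) (r.len - t) := by
      intro t ht
      exact flip_traj r hN2 t ht (π i) (hπlt i (by omega))
    have hbd : ∀ t, t ≤ r.len → r.traj (π i) t < A.N :=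
      fun t ht => traj_lt r t ht _ (hπlt i (by omega))
    rcases hmono' with m | m
    · left
      intro a b hab hb
      have key := m (r.len - b) (r.len - a) (by omega) (by exact Nat.sub_le r.len a)
      have e1 := htr (r.len - b) (by omega)
      have e2 := htr (r.len - a) (by omega)
      have e3 : r.len - (r.len - b) = b := by omega
      have e4 : r.len - (r.len - a) = a := by omega
      rw [e1, e2, e3, e4] at key
      have := hbd a (by omega)
      have := hbd b hb
      omega
    · right
      intro a b hab hb
      have key := m (r.len - b) (r.len - a) (by omega) (by exact Nat.sub_le r.len a)
      have e1 := htr (r.len - b) (by omega)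
      have e2 := htr (r.len - a) (by omega)
      have e3 : r.len - (r.len - b) = b := by omega
      have e4 : r.len - (r.len - a) = a := by omega
      rw [e1, e2, e3, e4] at key
      have := hbd a (by omega)
      have := hbd b hb
      omega

end FTM

/-- in a funnel reduction on a linear diagram one of whose ends is
collapsible, the trajectory of every non-final vertex is monotone. -/
theorem funnel_trajectory_monotone {A B : Diagram} (π : ℕ → ℕ) (r : Reduction A B)
    (hlin : IsLinear A π) (hfun : r.IsFunnel π)
    (hcol : r.CollapsibleAt π 0 ∨ r.CollapsibleAt π r.len) :
    ∀ i, i < A.N - 2 →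
      (∀ t t', t ≤ t' → t' ≤ r.len → r.traj (π i) t ≤ r.traj (π i) t') ∨
      (∀ t t', t ≤ t' → t' ≤ r.len → r.traj (π i) t' ≤ r.traj (π i) t) := by
  obtain ⟨hN2, hbij, hadj, huniq⟩ := hlin
  have hπlt : ∀ i, i < A.N → π i < A.N := fun i hi => hbij.1 hi
  have hπinj : ∀ i j, i < A.N → j < A.N → π i = π j → i = j :=
    fun i j hi hj e => hbij.2.1 hi hj e
  have hπsurj : ∀ h, h < A.N → ∃ i, i < A.N ∧ π i = h := by
    intro h hh
    obtain ⟨i, hi, e⟩ := hbij.2.2 (show h ∈ Set.Iio A.N from hh)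
    exact ⟨i, hi, e⟩
  have hadjPQ : Adjacent A (π (A.N-2)) (π (A.N-1)) :=
    (hadj (A.N-2) (A.N-1) (by omega) (by omega)).mpr (Or.inl (by omega))
  rcases hadjPQ with hedge | hedge
  · obtain ⟨hπPQ, c0, hc0⟩ := FTM.prof_of_edge hedge
    exact FTM.final_main r π (A.N-2) (A.N-1) hN2 hπlt hπinj hπsurj (Or.inl ⟨rfl, rfl⟩)
      hπPQ ⟨c0, hc0⟩ hfun hcol
  · obtain ⟨hπPQ, c0, hc0⟩ := FTM.prof_of_edge hedge
    exact FTM.final_main r π (A.N-1) (A.N-2) hN2 hπlt hπinj hπsurj (Or.inr ⟨rfl, rfl⟩)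
      hπPQ ⟨c0, hc0⟩ hfun hcol
end
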